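/- arXiv:0911.4347 — 7 statements merged into one kernel-verified Lean document; each statement's English description precedes it below -/
import Mathlib

section
/- Let V be a normed vector space, x₀ ∈ V, and Φ : V → (−∞,∞] a positively homogeneous convex function satisfying liminf_{‖x−x₀‖→0} Φ(x) ≥ Φ(x₀). If Φ(x₀) < ∞ then for each ε > 0 there exists a continuous linear functional v : V → ℝ with Φ(x₀) − ε ≤ v(x₀) and v(x) ≤ Φ(x) for all x ∈ V. -/
/-!
The epigraph `{(x, t) | Φ x ≤ t}` of `Φ` is a convex cone in `V × ℝ`, and lower
semicontinuity makes it disjoint from the open convex set `B(x₀, δ) × (-∞, Φ x₀ - ε)`.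
A separating functional `f` is nonnegative on the cone and strictly negative on the open
set; these two facts force `c = f (0, 1) > 0`, so `v x = -f (x, 0) / c` is a minorant of `Φ`
with `v x₀ ≥ Φ x₀ - ε`.
-/

open Filter Topology

theorem LinearMap.nonneg_of_le_of_smul_mem {M : Type*} [AddCommGroup M] [Module ℝ M]
    (f : M →ₗ[ℝ] ℝ) {s : Set M} (hs : ∀ t : ℝ, 0 ≤ t → ∀ p ∈ s, t • p ∈ s) {u : ℝ}
    (hu : ∀ p ∈ s, u ≤ f p) {p : M} (hp : p ∈ s) : 0 ≤ f p := by
  by_contra! hneg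
  have hscale : f (((|u| + 1) / -f p) • p) = -(|u| + 1) := by
    rw [map_smul, smul_eq_mul]
    field_simp [hneg.ne]
  have hscale_mem : ((|u| + 1) / -f p) • p ∈ s :=
    hs _ (div_nonneg (by positivity) (neg_nonneg.mpr hneg.le)) p hp
  linarith [hu _ hscale_mem, neg_abs_le u]

section Epigraph

variable {V : Type*} [AddCommGroup V] [Module ℝ V] {Φ : V → EReal}

def epigraph (Φ : V → EReal) : Set (V × ℝ) := {p | Φ p.1 ≤ p.2}

theorem convex_epigraph
    (hconv : ∀ x y (a b : ℝ), 0 ≤ a → 0 ≤ b → a + b = 1 →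
      Φ (a • x + b • y) ≤ (a : EReal) * Φ x + (b : EReal) * Φ y) :
    Convex ℝ (epigraph Φ) := by
  rintro p (hp : Φ p.1 ≤ p.2) q (hq : Φ q.1 ≤ q.2) a b ha hb hab
  calc Φ (a • p.1 + b • q.1) ≤ (a : EReal) * Φ p.1 + (b : EReal) * Φ q.1 :=
        hconv _ _ a b ha hb hab
    _ ≤ (a : EReal) * p.2 + (b : EReal) * q.2 :=
        add_le_add (mul_le_mul_of_nonneg_left hp (mod_cast ha))
          (mul_le_mul_of_nonneg_left hq (mod_cast hb))
    _ = ((a * p.2 + b * q.2 : ℝ) : EReal) := by push_cast; rfl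

theorem smul_mem_epigraph
    (hhom : ∀ (t : ℝ), 0 ≤ t → ∀ x, Φ (t • x) = (t : EReal) * Φ x) {t : ℝ} (ht : 0 ≤ t)
    {p : V × ℝ} (hp : p ∈ epigraph Φ) : t • p ∈ epigraph Φ := by
  change Φ (t • p.1) ≤ ((t * p.2 : ℝ) : EReal)
  rw [hhom t ht, EReal.coe_mul]
  exact mul_le_mul_of_nonneg_left hp (mod_cast ht)

theorem zero_mem_epigraph
    (hhom : ∀ (t : ℝ), 0 ≤ t → ∀ x, Φ (t • x) = (t : EReal) * Φ x) :
    (0 : V × ℝ) ∈ epigraph Φ := by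
  change Φ 0 ≤ ((0 : ℝ) : EReal)
  simpa using (hhom 0 le_rfl 0).le

end Epigraph

theorem ContinuousLinearMap.apply_prodMk_eq {V : Type*} [AddCommGroup V] [Module ℝ V]
    [TopologicalSpace V] (f : V × ℝ →L[ℝ] ℝ) (x : V) (t : ℝ) :
    f (x, t) = f.comp (ContinuousLinearMap.inl ℝ V ℝ) x + t * f (0, 1) := by
  rw [← f.comp_inl_add_comp_inr (x, t), ← smul_eq_mul, ← map_smul]
  simp

theorem exists_continuousLinearMap_le_of_eventually_lt
    {V : Type*} [NormedAddCommGroup V] [NormedSpace ℝ V] {Φ : V → EReal}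
    (hhom : ∀ (t : ℝ), 0 ≤ t → ∀ x, Φ (t • x) = (t : EReal) * Φ x)
    (hconv : ∀ x y (a b : ℝ), 0 ≤ a → 0 ≤ b → a + b = 1 →
      Φ (a • x + b • y) ≤ (a : EReal) * Φ x + (b : EReal) * Φ y)
    {x₀ : V} (hfin : Φ x₀ < ⊤) {m : ℝ} (hm : ∀ᶠ x in 𝓝 x₀, (m : EReal) < Φ x) :
    ∃ v : V →L[ℝ] ℝ, m ≤ v x₀ ∧ ∀ x, (v x : EReal) ≤ Φ x := by
  obtain ⟨δ, hδ, hball⟩ := Metric.eventually_nhds_iff_ball.mp hm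
  obtain ⟨r, hr, -⟩ := EReal.exists_between_coe_real hfin
  have hdisj : Disjoint (Metric.ball x₀ δ ×ˢ Set.Iio m) (epigraph Φ) := by
    refine Set.disjoint_left.mpr fun ⟨x, t⟩ ⟨hx, ht⟩ hE => ?_
    exact (hball x hx).not_ge ((hE : Φ x ≤ t).trans (mod_cast (ht : t < m).le))
  obtain ⟨f, u, hfU, hfE⟩ := geometric_hahn_banach_open
    ((convex_ball x₀ δ).prod (convex_Iio m)) (Metric.isOpen_ball.prod isOpen_Iio)
    (convex_epigraph hconv) hdisj
  set a := f.comp (ContinuousLinearMap.inl ℝ V ℝ)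
  set c := f (0, 1)
  have hfE0 : ∀ x (t : ℝ), Φ x ≤ t → 0 ≤ a x + t * c := fun x t hxt => by
    rw [← f.apply_prodMk_eq]
    exact f.toLinearMap.nonneg_of_le_of_smul_mem
      (fun t ht p hp => smul_mem_epigraph hhom ht hp) hfE hxt
  have hfU0 : ∀ t < m, a x₀ + t * c < 0 := fun t ht => by
    have hu : u ≤ 0 := by simpa using hfE 0 (zero_mem_epigraph hhom)
    rw [← f.apply_prodMk_eq]
    exact (hfU (x₀, t) ⟨Metric.mem_ball_self hδ, ht⟩).trans_le hu
  -- If `c ≤ 0`, then `t ↦ a x₀ + t * c` is antitone, yet negative at `t < min m r` and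
  -- nonnegative at `t = r`.
  have hc : 0 < c := by
    by_contra! hc
    have hbelow := hfU0 (min m r - 1) (by linarith [min_le_left m r])
    have habove := hfE0 x₀ r hr.le
    nlinarith [min_le_right m r]
  have hv : ∀ x, ((-c⁻¹) • a) x = -a x / c := fun x => by
    simp [div_eq_inv_mul]
  refine ⟨(-c⁻¹) • a, le_of_forall_lt fun t ht => ?_, fun x => ?_⟩
  · rw [hv, lt_div_iff₀ hc]
    linarith [hfU0 t ht]
  · refine EReal.le_of_forall_lt_iff_le.mp fun z hz => ?_
    rw [hv]
    exact_mod_cast (div_le_iff₀ hc).mpr (by linarith [hfE0 x z hz.le])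

theorem stmt2
    {V : Type*} [NormedAddCommGroup V] [NormedSpace ℝ V]
    (Φ : V → EReal) (hbot : ∀ x, Φ x ≠ ⊥)
    (hhom : ∀ (t : ℝ), 0 ≤ t → ∀ x, Φ (t • x) = (t : EReal) * Φ x)
    (hconv : ∀ x y (a b : ℝ), 0 ≤ a → 0 ≤ b → a + b = 1 →
      Φ (a • x + b • y) ≤ (a : EReal) * Φ x + (b : EReal) * Φ y)
    (x₀ : V) (hlsc : Φ x₀ ≤ liminf Φ (nhds x₀))
    (hfin : Φ x₀ < ⊤) (ε : ℝ) (hε : 0 < ε) :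
    ∃ v : V →L[ℝ] ℝ, Φ x₀ - (ε : EReal) ≤ (v x₀ : EReal) ∧ ∀ x, (v x : EReal) ≤ Φ x := by
  obtain ⟨r, hr⟩ : ∃ r : ℝ, Φ x₀ = r := ⟨_, (EReal.coe_toReal hfin.ne (hbot x₀)).symm⟩
  have hlt : ((r - ε : ℝ) : EReal) < Φ x₀ := hr ▸ mod_cast sub_lt_self r hε
  have hm : ∀ᶠ x in 𝓝 x₀, ((r - ε : ℝ) : EReal) < Φ x :=
    eventually_lt_of_lt_liminf (hlt.trans_le hlsc)
  obtain ⟨v, hv₀, hv⟩ := exists_continuousLinearMap_le_of_eventually_lt hhom hconv hfin hm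
  refine ⟨v, ?_, hv⟩
  rw [hr, ← EReal.coe_sub]
  exact_mod_cast hv₀
end

section
/- Jensen-type mass bound: let π be a finite nonnegative measure on X × Y with marginals f·μ and g·ν where ‖f−1‖_{L¹(μ)} < γ and ‖g−1‖_{L¹(ν)} < γ for some γ ∈ (0,1). Define the measure π̃ by dπ̃/dπ(x,y) = 1/((1+|f(x)−1|)(1+|g(y)−1|)). Then π̃ ≤ π, its X-projection is ≤ μ, its Y-projection is ≤ ν, and ‖π̃‖ ≥ (1−γ)/(1+γ/(1−γ))² ≥ (1−γ)³. -/
/-!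
Write `1 + |r - 1| = (2 - min r 1) * max r 1`. After reweighting by `1 / (max (f x) 1 * max (g y) 1)`,
the damping weight becomes `1 / (s t)` with `s = 2 - min (f x) 1` and `t = 2 - min (g y) 1`.
This function is convex, so it lies above its tangent plane at `(1/c, 1/c)`:
`1 / (s t) ≥ c² (3 - c s - c t)` (AM-GM). The products that remain can be bounded by sums, and
then the weight is bounded below by `φ (f x) + φ (g y)`. Because of the marginal conditions,
integrating against `π` turns this into `∫ f φ(f) dμ + ∫ g φ(g) dν`. These integrals are controlled
by `ε_f = ∫ |f - 1| dμ` and `ε_g`, and the choice `c = 1 - (ε_f + ε_g)/2` gives total mass at least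
`(1 - (ε_f + ε_g)/2)³ ≥ (1 - γ)³`, which is exactly `(1 - γ) / (1 + γ/(1 - γ))²`.
-/

open MeasureTheory ENNReal

lemma three_sub_le_one_div_mul {x y : ℝ} (hx : 0 < x) (hy : 0 < y) : 3 - x - y ≤ 1 / (x * y) := by
  rw [le_div_iff₀ (by positivity)]
  nlinarith [sq_nonneg (x - y), sq_nonneg (x - 1), sq_nonneg (y - 1), mul_pos hx hy,
    sq_nonneg (x * y - 1), mul_pos (mul_pos hx hy) hx, mul_pos (mul_pos hx hy) hy]

lemma tangent_plane_le_div_mul_div {c u v a b : ℝ} (hc0 : 0 < c) (hc1 : c ≤ 1) (hu0 : 0 ≤ u)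
    (hu1 : u ≤ 1) (hv0 : 0 ≤ v) (hv1 : v ≤ 1) (ha : 0 ≤ a) (hb : 0 ≤ b) :
    c ^ 2 * ((3 - 2 * c) * (u + v - 1) - c * (a * u) - c * (b * v)) ≤
      u / (1 + a) * (v / (1 + b)) := by
  have hamgm := three_sub_le_one_div_mul (mul_pos hc0 (by linarith : (0 : ℝ) < 1 + a))
    (mul_pos hc0 (by linarith : (0 : ℝ) < 1 + b))
  have hsplit : u / (1 + a) * (v / (1 + b)) =
      c ^ 2 * (u * v) * (1 / (c * (1 + a) * (c * (1 + b)))) := by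
    field_simp
  rw [hsplit]
  refine le_trans ?_ (mul_le_mul_of_nonneg_left hamgm (by positivity))
  have : 0 ≤ (3 - 2 * c) * ((1 - u) * (1 - v)) + c * (a * u * (1 - v)) +
      c * (b * v * (1 - u)) := by
    have := sub_nonneg.2 hu1; have := sub_nonneg.2 hv1
    have : 0 ≤ 3 - 2 * c := by linarith
    positivity
  nlinarith [mul_nonneg (sq_nonneg c) this]

/-- The `r`-part of the tangent plane of `(s, t) ↦ 1 / (s t)` at `(1/c, 1/c)`, after reweighting by
`1 / max r 1` and splitting the plane into a function of `r` plus a function of `s`. -/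
noncomputable def marginalMinorant (c r : ℝ) : ℝ :=
  c ^ 2 * ((3 - 2 * c) * (1 / max r 1 - 1 / 2) - c * max (1 - r) 0)

lemma one_div_one_add_abs_sub_one_eq (r : ℝ) :
    1 / (1 + |r - 1|) = 1 / max r 1 / (1 + (1 - min r 1)) := by
  rcases le_total r 1 with h | h
  · rw [abs_of_nonpos (by linarith), min_eq_left h, max_eq_right h]; ring
  · rw [abs_of_nonneg (by linarith), min_eq_right h, max_eq_left h]; ring

lemma max_one_sub_zero_eq (r : ℝ) : max (1 - r) 0 = (1 - min r 1) * (1 / max r 1) := by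
  rcases le_total r 1 with h | h
  · rw [min_eq_left h, max_eq_right h, max_eq_left (by linarith)]; ring
  · rw [min_eq_right h, max_eq_left h, max_eq_right (by linarith)]; ring

lemma one_div_max_one_mem_Icc (r : ℝ) : 0 ≤ 1 / max r 1 ∧ 1 / max r 1 ≤ 1 :=
  ⟨by positivity, div_le_one_of_le₀ (le_max_right _ _) (by positivity)⟩

lemma marginalMinorant_add_le {c : ℝ} (hc0 : 0 < c) (hc1 : c ≤ 1) (r s : ℝ) :
    marginalMinorant c r + marginalMinorant c s ≤ 1 / ((1 + |r - 1|) * (1 + |s - 1|)) := by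
  have key := tangent_plane_le_div_mul_div hc0 hc1 (one_div_max_one_mem_Icc r).1
    (one_div_max_one_mem_Icc r).2 (one_div_max_one_mem_Icc s).1 (one_div_max_one_mem_Icc s).2
    (sub_nonneg.2 (min_le_right r 1)) (sub_nonneg.2 (min_le_right s 1))
  rw [← max_one_sub_zero_eq, ← max_one_sub_zero_eq, ← one_div_one_add_abs_sub_one_eq,
    ← one_div_one_add_abs_sub_one_eq, one_div_mul_one_div] at key
  unfold marginalMinorant
  linarith

lemma le_mul_marginalMinorant {c : ℝ} (hc0 : 0 < c) (r : ℝ) :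
    c ^ 2 * ((3 - 2 * c) / 2 - 3 / 2 * |r - 1|) ≤ r * marginalMinorant c r := by
  unfold marginalMinorant
  rcases le_total r 1 with h | h
  · rw [abs_of_nonpos (by linarith), max_eq_right h, max_eq_left (by linarith)]
    nlinarith [mul_nonneg (sq_nonneg c) (mul_nonneg hc0.le (sq_nonneg (1 - r)))]
  · rw [abs_of_nonneg (by linarith), max_eq_left h, max_eq_right (by linarith)]
    have hr : r ≠ 0 := by positivity
    have : r * (c ^ 2 * ((3 - 2 * c) * (1 / r - 1 / 2) - c * 0)) =
        c ^ 2 * ((3 - 2 * c) * (1 - r / 2)) := by field_simp; ring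
    rw [this]
    nlinarith [mul_nonneg (sq_nonneg c) (mul_nonneg hc0.le (sub_nonneg.2 h))]

lemma abs_marginalMinorant_le {c r : ℝ} (hc0 : 0 < c) (hc1 : c ≤ 1) (hr : 0 ≤ r) :
    |marginalMinorant c r| ≤ 2 := by
  have hu := one_div_max_one_mem_Icc r
  have ht : 0 ≤ max (1 - r) 0 ∧ max (1 - r) 0 ≤ 1 :=
    ⟨le_max_right _ _, max_le (by linarith) zero_le_one⟩
  have hinner : |(3 - 2 * c) * (1 / max r 1 - 1 / 2) - c * max (1 - r) 0| ≤ 2 := by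
    rw [abs_le]
    constructor <;> nlinarith [mul_nonneg hc0.le ht.1, mul_le_mul hc1 ht.2 ht.1 zero_le_one]
  have hc2 : |c ^ 2| ≤ 1 := by rw [abs_of_nonneg (by positivity)]; nlinarith
  unfold marginalMinorant
  rw [abs_mul]
  nlinarith [abs_nonneg (c ^ 2)]

lemma measurable_marginalMinorant (c : ℝ) : Measurable (marginalMinorant c) := by
  unfold marginalMinorant
  fun_prop

lemma one_div_one_add_abs_sub_one_le_one (r : ℝ) : 1 / (1 + |r - 1|) ≤ 1 :=
  div_le_one_of_le₀ (le_add_of_nonneg_right (abs_nonneg _)) (by positivity)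

lemma mul_one_div_one_add_abs_sub_one_le_one (r : ℝ) : r * (1 / (1 + |r - 1|)) ≤ 1 := by
  rw [mul_one_div, div_le_one (by positivity)]
  linarith [le_abs_self (r - 1)]

lemma one_div_one_add_abs_mul_le_left (r s : ℝ) :
    1 / ((1 + |r - 1|) * (1 + |s - 1|)) ≤ 1 / (1 + |r - 1|) :=
  one_div_le_one_div_of_le (by positivity) (le_mul_of_one_le_right (by positivity)
    (le_add_of_nonneg_right (abs_nonneg _)))

lemma one_div_one_add_abs_mul_le_right (r s : ℝ) :
    1 / ((1 + |r - 1|) * (1 + |s - 1|)) ≤ 1 / (1 + |s - 1|) :=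
  mul_comm (1 + |r - 1|) _ ▸ one_div_one_add_abs_mul_le_left s r

section Marginals

variable {X Y : Type*} [MeasurableSpace X] [MeasurableSpace Y] {π : Measure (X × Y)}
  {μ : Measure X} {ν : Measure Y}

lemma withDensity_le_self_of_le_one {w : X → ℝ≥0∞} (hw : ∀ x, w x ≤ 1) : μ.withDensity w ≤ μ :=
  (withDensity_mono (ae_of_all _ hw)).trans_eq withDensity_one

lemma fst_withDensity_comp_fst {φ : X → ℝ≥0∞} (hφ : AEMeasurable φ π.fst) :
    (π.withDensity fun p => φ p.1).fst = π.fst.withDensity φ := by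
  ext s hs
  rw [Measure.fst_apply hs, withDensity_apply _ (measurable_fst hs), withDensity_apply _ hs,
    Measure.fst, Measure.restrict_map measurable_fst hs,
    lintegral_map' (Measure.restrict_map measurable_fst hs ▸ hφ.restrict)
      measurable_fst.aemeasurable]

lemma snd_withDensity_comp_snd {φ : Y → ℝ≥0∞} (hφ : AEMeasurable φ π.snd) :
    (π.withDensity fun p => φ p.2).snd = π.snd.withDensity φ := by
  ext s hs
  rw [Measure.snd_apply hs, withDensity_apply _ (measurable_snd hs), withDensity_apply _ hs,
    Measure.snd, Measure.restrict_map measurable_snd hs,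
    lintegral_map' (Measure.restrict_map measurable_snd hs ▸ hφ.restrict)
      measurable_snd.aemeasurable]

lemma fst_withDensity_le {ρ φ : X → ℝ≥0∞} {w : X × Y → ℝ≥0∞}
    (hfst : π.fst = μ.withDensity ρ) (hρ : AEMeasurable ρ μ) (hφ : AEMeasurable φ μ)
    (hw : ∀ p, w p ≤ φ p.1) (hρφ : ∀ x, ρ x * φ x ≤ 1) : (π.withDensity w).fst ≤ μ :=
  calc (π.withDensity w).fst ≤ (π.withDensity fun p => φ p.1).fst :=
        Measure.fst_mono (withDensity_mono (ae_of_all _ hw))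
    _ = μ.withDensity (ρ * φ) := by
        rw [fst_withDensity_comp_fst (hφ.mono_ac (hfst ▸ withDensity_absolutelyContinuous _ _)),
          hfst, withDensity_mul₀ hρ hφ]
    _ ≤ μ := withDensity_le_self_of_le_one hρφ

lemma snd_withDensity_le {ρ φ : Y → ℝ≥0∞} {w : X × Y → ℝ≥0∞}
    (hsnd : π.snd = ν.withDensity ρ) (hρ : AEMeasurable ρ ν) (hφ : AEMeasurable φ ν)
    (hw : ∀ p, w p ≤ φ p.2) (hρφ : ∀ y, ρ y * φ y ≤ 1) : (π.withDensity w).snd ≤ ν :=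
  calc (π.withDensity w).snd ≤ (π.withDensity fun p => φ p.2).snd :=
        Measure.snd_mono (withDensity_mono (ae_of_all _ hw))
    _ = ν.withDensity (ρ * φ) := by
        rw [snd_withDensity_comp_snd (hφ.mono_ac (hsnd ▸ withDensity_absolutelyContinuous _ _)),
          hsnd, withDensity_mul₀ hρ hφ]
    _ ≤ ν := withDensity_le_self_of_le_one hρφ

lemma integral_comp_fst {f : X → ℝ} (hfst : π.fst = μ.withDensity fun x => ENNReal.ofReal (f x))
    (hf0 : ∀ x, 0 ≤ f x) (hf : AEMeasurable f μ) {φ : X → ℝ}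
    (hφ : AEStronglyMeasurable φ π.fst) :
    ∫ p, φ p.1 ∂π = ∫ x, f x * φ x ∂μ := by
  rw [← integral_map measurable_fst.aemeasurable hφ, ← Measure.fst, hfst,
    integral_withDensity_eq_integral_toReal_smul₀ hf.ennreal_ofReal
      (ae_of_all _ fun _ => ofReal_lt_top)]
  simp only [toReal_ofReal (hf0 _), smul_eq_mul]

lemma integral_comp_snd {g : Y → ℝ} (hsnd : π.snd = ν.withDensity fun y => ENNReal.ofReal (g y))
    (hg0 : ∀ y, 0 ≤ g y) (hg : AEMeasurable g ν) {φ : Y → ℝ}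
    (hφ : AEStronglyMeasurable φ π.snd) :
    ∫ p, φ p.2 ∂π = ∫ y, g y * φ y ∂ν := by
  rw [← integral_map measurable_snd.aemeasurable hφ, ← Measure.snd, hsnd,
    integral_withDensity_eq_integral_toReal_smul₀ hg.ennreal_ofReal
      (ae_of_all _ fun _ => ofReal_lt_top)]
  simp only [toReal_ofReal (hg0 _), smul_eq_mul]

end Marginals

lemma le_integral_mul_marginalMinorant {X : Type*} [MeasurableSpace X] {μ : Measure X}
    [IsProbabilityMeasure μ] {f : X → ℝ} (hf0 : ∀ x, 0 ≤ f x) (hfint : Integrable f μ)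
    {c : ℝ} (hc0 : 0 < c) (hc1 : c ≤ 1) :
    c ^ 2 * ((3 - 2 * c) / 2 - 3 / 2 * ∫ x, |f x - 1| ∂μ) ≤
      ∫ x, f x * marginalMinorant c (f x) ∂μ := by
  have hint : Integrable (fun x => |f x - 1|) μ := (hfint.sub (integrable_const 1)).abs
  calc c ^ 2 * ((3 - 2 * c) / 2 - 3 / 2 * ∫ x, |f x - 1| ∂μ)
      = ∫ x, c ^ 2 * ((3 - 2 * c) / 2 - 3 / 2 * |f x - 1|) ∂μ := by
        rw [integral_const_mul, integral_sub (integrable_const _) (hint.const_mul _),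
          integral_const, integral_const_mul]
        simp
    _ ≤ ∫ x, f x * marginalMinorant c (f x) ∂μ :=
        integral_mono (((integrable_const _).sub (hint.const_mul _)).const_mul _)
          (hfint.mul_bdd ((measurable_marginalMinorant c).comp_aemeasurable
            hfint.aemeasurable).aestronglyMeasurable
            (ae_of_all _ fun x => abs_marginalMinorant_le hc0 hc1 (hf0 x)))
          fun x => le_mul_marginalMinorant hc0 (f x)

section Damping

variable {X Y : Type*} {f : X → ℝ} {g : Y → ℝ}

noncomputable def dampingWeight (f : X → ℝ) (g : Y → ℝ) (p : X × Y) : ℝ :=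
  1 / ((1 + |f p.1 - 1|) * (1 + |g p.2 - 1|))

lemma dampingWeight_nonneg (p : X × Y) : 0 ≤ dampingWeight f g p := by
  unfold dampingWeight; positivity

lemma dampingWeight_le_one (p : X × Y) : dampingWeight f g p ≤ 1 :=
  (one_div_one_add_abs_mul_le_left _ _).trans (one_div_one_add_abs_sub_one_le_one _)

variable [MeasurableSpace X] [MeasurableSpace Y] {π : Measure (X × Y)} {μ : Measure X}
  {ν : Measure Y}

lemma integrable_dampingWeight [IsFiniteMeasure π] (hf : AEMeasurable f π.fst)
    (hg : AEMeasurable g π.snd) : Integrable (dampingWeight f g) π := by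
  refine Integrable.of_bound ?_ 1 (ae_of_all _ fun p => ?_)
  · have h : Measurable fun q : ℝ × ℝ => 1 / ((1 + |q.1 - 1|) * (1 + |q.2 - 1|)) := by fun_prop
    exact (h.comp_aemeasurable ((hf.comp_aemeasurable measurable_fst.aemeasurable).prodMk
      (hg.comp_aemeasurable measurable_snd.aemeasurable))).aestronglyMeasurable
  · rw [Real.norm_of_nonneg (dampingWeight_nonneg p)]
    exact dampingWeight_le_one p

variable [IsFiniteMeasure π] [IsProbabilityMeasure μ] [IsProbabilityMeasure ν]
  (hfst : π.fst = μ.withDensity fun x => ENNReal.ofReal (f x))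
  (hsnd : π.snd = ν.withDensity fun y => ENNReal.ofReal (g y))
  (hf0 : ∀ x, 0 ≤ f x) (hg0 : ∀ y, 0 ≤ g y) (hfint : Integrable f μ) (hgint : Integrable g ν)
include hfst hsnd hf0 hg0 hfint hgint

lemma sq_mul_le_integral_dampingWeight {c : ℝ} (hc0 : 0 < c) (hc1 : c ≤ 1) :
    c ^ 2 * (3 - 2 * c - 3 / 2 * (∫ x, |f x - 1| ∂μ + ∫ y, |g y - 1| ∂ν)) ≤
      ∫ p, dampingWeight f g p ∂π := by
  have hf : AEMeasurable f π.fst :=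
    hfint.aemeasurable.mono_ac (hfst ▸ withDensity_absolutelyContinuous _ _)
  have hg : AEMeasurable g π.snd :=
    hgint.aemeasurable.mono_ac (hsnd ▸ withDensity_absolutelyContinuous _ _)
  have hmf : AEMeasurable (fun x => marginalMinorant c (f x)) π.fst :=
    (measurable_marginalMinorant c).comp_aemeasurable hf
  have hmg : AEMeasurable (fun y => marginalMinorant c (g y)) π.snd :=
    (measurable_marginalMinorant c).comp_aemeasurable hg
  have hmfπ : Integrable (fun p => marginalMinorant c (f p.1)) π :=
    .of_bound (hmf.comp_aemeasurable measurable_fst.aemeasurable).aestronglyMeasurable 2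
      (ae_of_all _ fun p => abs_marginalMinorant_le hc0 hc1 (hf0 p.1))
  have hmgπ : Integrable (fun p => marginalMinorant c (g p.2)) π :=
    .of_bound (hmg.comp_aemeasurable measurable_snd.aemeasurable).aestronglyMeasurable 2
      (ae_of_all _ fun p => abs_marginalMinorant_le hc0 hc1 (hg0 p.2))
  calc c ^ 2 * (3 - 2 * c - 3 / 2 * (∫ x, |f x - 1| ∂μ + ∫ y, |g y - 1| ∂ν))
      = c ^ 2 * ((3 - 2 * c) / 2 - 3 / 2 * ∫ x, |f x - 1| ∂μ) +
          c ^ 2 * ((3 - 2 * c) / 2 - 3 / 2 * ∫ y, |g y - 1| ∂ν) := by ring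
    _ ≤ ∫ x, f x * marginalMinorant c (f x) ∂μ + ∫ y, g y * marginalMinorant c (g y) ∂ν :=
        add_le_add (le_integral_mul_marginalMinorant hf0 hfint hc0 hc1)
          (le_integral_mul_marginalMinorant hg0 hgint hc0 hc1)
    _ = ∫ p, (marginalMinorant c (f p.1) + marginalMinorant c (g p.2)) ∂π := by
        rw [integral_add hmfπ hmgπ,
          integral_comp_fst hfst hf0 hfint.aemeasurable hmf.aestronglyMeasurable,
          integral_comp_snd hsnd hg0 hgint.aemeasurable hmg.aestronglyMeasurable]
    _ ≤ ∫ p, dampingWeight f g p ∂π :=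
        integral_mono (hmfπ.add hmgπ) (integrable_dampingWeight hf hg)
          fun p => marginalMinorant_add_le hc0 hc1 _ _

lemma ofReal_one_sub_pow_three_le_withDensity_dampingWeight :
    ENNReal.ofReal ((1 - (∫ x, |f x - 1| ∂μ + ∫ y, |g y - 1| ∂ν) / 2) ^ 3) ≤
      π.withDensity (fun p => ENNReal.ofReal (dampingWeight f g p)) Set.univ := by
  have hf : AEMeasurable f π.fst :=
    hfint.aemeasurable.mono_ac (hfst ▸ withDensity_absolutelyContinuous _ _)
  have hg : AEMeasurable g π.snd :=
    hgint.aemeasurable.mono_ac (hsnd ▸ withDensity_absolutelyContinuous _ _)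
  rw [withDensity_apply _ MeasurableSet.univ, Measure.restrict_univ,
    ← ofReal_integral_eq_lintegral_ofReal (integrable_dampingWeight hf hg)
      (ae_of_all _ dampingWeight_nonneg)]
  set ε := (∫ x, |f x - 1| ∂μ + ∫ y, |g y - 1| ∂ν) / 2
  rcases le_or_gt 1 ε with hε | hε
  · rw [ofReal_of_nonpos (Odd.pow_nonpos (by decide) (by linarith))]
    exact zero_le
  have hε0 : 0 ≤ ε := by
    have : 0 ≤ ∫ x, |f x - 1| ∂μ := integral_nonneg fun _ => abs_nonneg _
    have : 0 ≤ ∫ y, |g y - 1| ∂ν := integral_nonneg fun _ => abs_nonneg _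
    positivity
  refine ofReal_le_ofReal ?_
  calc (1 - ε) ^ 3
      = (1 - ε) ^ 2 * (3 - 2 * (1 - ε) - 3 / 2 * (∫ x, |f x - 1| ∂μ + ∫ y, |g y - 1| ∂ν)) := by
        ring
    _ ≤ ∫ p, dampingWeight f g p ∂π :=
        sq_mul_le_integral_dampingWeight hfst hsnd hf0 hg0 hfint hgint (by linarith)
          (by linarith)

end Damping

theorem stmt4_general
    {X Y : Type*} [MeasurableSpace X]
    [MeasurableSpace Y]
    (μ : Measure X) (ν : Measure Y) [IsProbabilityMeasure μ] [IsProbabilityMeasure ν]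
    (f : X → ℝ) (g : Y → ℝ) (hf0 : ∀ x, 0 ≤ f x) (hg0 : ∀ y, 0 ≤ g y)
    (hfint : Integrable f μ) (hgint : Integrable g ν)
    (π : Measure (X × Y)) [IsFiniteMeasure π]
    (hfst : π.fst = μ.withDensity (fun x => ENNReal.ofReal (f x)))
    (hsnd : π.snd = ν.withDensity (fun y => ENNReal.ofReal (g y)))
    (γ : ℝ) (hγ : γ ∈ Set.Ioo (0 : ℝ) 1)
    (hfγ : ∫ x, |f x - 1| ∂μ < γ) (hgγ : ∫ y, |g y - 1| ∂ν < γ) :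
    π.withDensity (fun p => ENNReal.ofReal (1 / ((1 + |f p.1 - 1|) * (1 + |g p.2 - 1|)))) ≤ π ∧
    (π.withDensity (fun p => ENNReal.ofReal (1 / ((1 + |f p.1 - 1|) * (1 + |g p.2 - 1|))))).fst ≤ μ ∧
    (π.withDensity (fun p => ENNReal.ofReal (1 / ((1 + |f p.1 - 1|) * (1 + |g p.2 - 1|))))).snd ≤ ν ∧
    ENNReal.ofReal ((1 - γ) / (1 + γ / (1 - γ)) ^ 2) ≤
      (π.withDensity (fun p => ENNReal.ofReal (1 / ((1 + |f p.1 - 1|) * (1 + |g p.2 - 1|))))) Set.univ ∧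
    ENNReal.ofReal ((1 - γ) ^ 3) ≤ ENNReal.ofReal ((1 - γ) / (1 + γ / (1 - γ)) ^ 2) := by
  obtain ⟨-, hγ1⟩ := hγ
  have hγ_cube : (1 - γ) / (1 + γ / (1 - γ)) ^ 2 = (1 - γ) ^ 3 := by
    have : 1 - γ ≠ 0 := by linarith
    field_simp
    ring
  rw [hγ_cube]
  refine ⟨withDensity_le_self_of_le_one fun p => ofReal_le_one.2 (dampingWeight_le_one p),
    fst_withDensity_le hfst hfint.aemeasurable.ennreal_ofReal
      (φ := fun x => ENNReal.ofReal (1 / (1 + |f x - 1|))) (by fun_prop)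
      (fun p => ofReal_le_ofReal (one_div_one_add_abs_mul_le_left _ _))
      (fun x => (ofReal_mul (hf0 x)).symm.trans_le
        (ofReal_le_one.2 (mul_one_div_one_add_abs_sub_one_le_one _))),
    snd_withDensity_le hsnd hgint.aemeasurable.ennreal_ofReal
      (φ := fun y => ENNReal.ofReal (1 / (1 + |g y - 1|))) (by fun_prop)
      (fun p => ofReal_le_ofReal (one_div_one_add_abs_mul_le_right _ _))
      (fun y => (ofReal_mul (hg0 y)).symm.trans_le
        (ofReal_le_one.2 (mul_one_div_one_add_abs_sub_one_le_one _))),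
    (ofReal_le_ofReal (pow_le_pow_left₀ (by linarith) (by linarith) 3)).trans
      (ofReal_one_sub_pow_three_le_withDensity_dampingWeight hfst hsnd hf0 hg0 hfint hgint),
    le_rfl⟩

theorem stmt4
    {X Y : Type*} [MeasurableSpace X] [TopologicalSpace X] [PolishSpace X] [BorelSpace X]
    [MeasurableSpace Y] [TopologicalSpace Y] [PolishSpace Y] [BorelSpace Y]
    (μ : Measure X) (ν : Measure Y) [IsProbabilityMeasure μ] [IsProbabilityMeasure ν]
    (f : X → ℝ) (g : Y → ℝ) (hf0 : ∀ x, 0 ≤ f x) (hg0 : ∀ y, 0 ≤ g y)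
    (hfint : Integrable f μ) (hgint : Integrable g ν)
    (π : Measure (X × Y)) [IsFiniteMeasure π]
    (hfst : π.fst = μ.withDensity (fun x => ENNReal.ofReal (f x)))
    (hsnd : π.snd = ν.withDensity (fun y => ENNReal.ofReal (g y)))
    (γ : ℝ) (hγ : γ ∈ Set.Ioo (0 : ℝ) 1)
    (hfγ : ∫ x, |f x - 1| ∂μ < γ) (hgγ : ∫ y, |g y - 1| ∂ν < γ) :
    π.withDensity (fun p => ENNReal.ofReal (1 / ((1 + |f p.1 - 1|) * (1 + |g p.2 - 1|)))) ≤ π ∧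
    (π.withDensity (fun p => ENNReal.ofReal (1 / ((1 + |f p.1 - 1|) * (1 + |g p.2 - 1|))))).fst ≤ μ ∧
    (π.withDensity (fun p => ENNReal.ofReal (1 / ((1 + |f p.1 - 1|) * (1 + |g p.2 - 1|))))).snd ≤ ν ∧
    ENNReal.ofReal ((1 - γ) / (1 + γ / (1 - γ)) ^ 2) ≤
      (π.withDensity (fun p => ENNReal.ofReal (1 / ((1 + |f p.1 - 1|) * (1 + |g p.2 - 1|))))) Set.univ ∧
    ENNReal.ofReal ((1 - γ) ^ 3) ≤ ENNReal.ofReal ((1 - γ) / (1 + γ / (1 - γ)) ^ 2) :=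
  stmt4_general μ ν f g hf0 hg0 hfint hgint π hfst hsnd γ hγ hfγ hgγ
end

section
/- Duality gap example: let X = Y = [0,1], μ = ν = Lebesgue measure, and define c(x,y) = 0 if y < x, c(x,y) = 1 if x = y, and c(x,y) = ∞ if x < y. Then the primal value P = inf{∫ c dπ : π ∈ Π(μ,ν)} equals 1, while the dual value D = sup{∫φ dμ + ∫ψ dν : (φ,ψ) integrable with φ(x)+ψ(y) ≤ c(x,y) for all (x,y)} equals 0. -/
open MeasureTheory ENNReal

/-- Lebesgue measure on `[0,1]`. -/
noncomputable def lam : Measure ℝ := volume.restrict (Set.Icc 0 1)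

/-- The cost function of the duality gap example: `0` below the diagonal,
`1` on the diagonal, `∞` above the diagonal. -/
noncomputable def cGap : ℝ × ℝ → ℝ≥0∞ :=
  fun p => if p.2 < p.1 then 0 else if p.1 = p.2 then 1 else ⊤

/-!
Primal side: a coupling of two equal marginals that charges no mass above the diagonal must live on
the diagonal (compare the integrals of `arctan` of the two coordinates), so either the cost is `∞`
on a set of positive mass or it is `1` almost everywhere; the diagonal coupling attains `1`.

Dual side: `φ x + ψ y ≤ 0` whenever `y < x`. Pairing `x` with `x - h` gives
`∫_h^1 φ + ∫_0^{1-h} ψ ≤ 0` for every `h > 0`, and letting `h → 0` gives `∫ φ + ∫ ψ ≤ 0`;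
the pair `φ = ψ = 0` attains `0`.
-/

instance : IsProbabilityMeasure lam :=
  ⟨by simp [lam, Real.volume_Icc]⟩

lemma measurable_cGap : Measurable cGap :=
  Measurable.ite (measurableSet_lt measurable_snd measurable_fst) measurable_const <|
    Measurable.ite (measurableSet_eq_fun measurable_fst measurable_snd) measurable_const
      measurable_const

lemma integrable_arctan_comp {α : Type*} [MeasurableSpace α] {μ : Measure α} [IsFiniteMeasure μ]
    {u : α → ℝ} (hu : Measurable u) : Integrable (fun a => Real.arctan (u a)) μ :=
  .of_bound (Real.continuous_arctan.measurable.comp hu).aestronglyMeasurable (Real.pi / 2)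
    (.of_forall fun _ => abs_le.2
      ⟨(Real.neg_pi_div_two_lt_arctan _).le, (Real.arctan_lt_pi_div_two _).le⟩)

lemma ae_fst_eq_snd_of_fst_eq_snd {μ : Measure (ℝ × ℝ)} [IsFiniteMeasure μ] (h : μ.fst = μ.snd)
    (hle : ∀ᵐ p ∂μ, p.2 ≤ p.1) : ∀ᵐ p ∂μ, p.1 = p.2 := by
  have h1 := integrable_arctan_comp (μ := μ) measurable_fst
  have h2 := integrable_arctan_comp (μ := μ) measurable_snd
  have hmarg : ∫ p, Real.arctan p.1 ∂μ = ∫ p, Real.arctan p.2 ∂μ := by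
    have hf {ν : Measure ℝ} : AEStronglyMeasurable Real.arctan ν :=
      Real.continuous_arctan.aestronglyMeasurable
    calc ∫ p, Real.arctan p.1 ∂μ = ∫ x, Real.arctan x ∂μ.fst :=
          (integral_map measurable_fst.aemeasurable hf).symm
      _ = ∫ x, Real.arctan x ∂μ.snd := by rw [h]
      _ = ∫ p, Real.arctan p.2 ∂μ := integral_map measurable_snd.aemeasurable hf
  have hnonneg : 0 ≤ᵐ[μ] fun p => Real.arctan p.1 - Real.arctan p.2 := by
    filter_upwards [hle] with p hp
    exact sub_nonneg.2 (Real.arctan_strictMono.monotone hp)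
  have hzero := (integral_eq_zero_iff_of_nonneg_ae hnonneg (h1.sub h2)).1
    (by rw [integral_sub h1 h2, hmarg, sub_self])
  filter_upwards [hzero] with p hp
  exact Real.arctan_injective (sub_eq_zero.1 hp)

lemma one_le_lintegral_cGap {μ : Measure (ℝ × ℝ)} [IsProbabilityMeasure μ] (h : μ.fst = μ.snd) :
    1 ≤ ∫⁻ p, cGap p ∂μ := by
  by_cases hle : ∀ᵐ p ∂μ, p.2 ≤ p.1
  · have hone : ∀ᵐ p ∂μ, cGap p = 1 := by
      filter_upwards [ae_fst_eq_snd_of_fst_eq_snd h hle] with p hp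
      simp [cGap, hp]
    rw [lintegral_congr_ae hone, lintegral_one, measure_univ]
  · set A : Set (ℝ × ℝ) := {p | p.1 < p.2}
    have hA : μ A ≠ 0 := by
      simpa [ae_iff, A] using hle
    have htop : ∫⁻ p in A, cGap p ∂μ = ⊤ := by
      rw [setLIntegral_congr_fun (measurableSet_lt measurable_fst measurable_snd)
        (g := fun _ => ⊤) fun p (hp : p.1 < p.2) => by simp [cGap, hp.not_gt, hp.ne],
        setLIntegral_const, top_mul hA]
    calc 1 ≤ ∫⁻ p in A, cGap p ∂μ := htop ▸ le_top
      _ ≤ ∫⁻ p, cGap p ∂μ := setLIntegral_le_lintegral _ _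

lemma lintegral_cGap_map_diag : ∫⁻ p, cGap p ∂(lam.map fun x => (x, x)) = 1 := by
  rw [lintegral_map measurable_cGap (measurable_id'.prodMk measurable_id')]
  simp [cGap]

lemma isLeast_primal :
    IsLeast {r : ℝ≥0∞ | ∃ π : Measure (ℝ × ℝ), IsProbabilityMeasure π ∧
      π.fst = lam ∧ π.snd = lam ∧ r = ∫⁻ p, cGap p ∂π} 1 := by
  refine ⟨⟨lam.map fun x => (x, x), ?_, ?_, ?_, lintegral_cGap_map_diag.symm⟩, ?_⟩
  · exact Measure.isProbabilityMeasure_map (measurable_id'.prodMk measurable_id').aemeasurable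
  · exact (Measure.fst_map_prodMk (X := fun x => x) measurable_id).trans Measure.map_id'
  · exact (Measure.snd_map_prodMk (Y := fun x => x) measurable_id).trans Measure.map_id'
  · rintro r ⟨π, hπ, h1, h2, rfl⟩
    exact one_le_lintegral_cGap (h1.trans h2.symm)

section Dual

variable {f g : ℝ → ℝ} {a b : ℝ}

lemma integral_add_integral_shift_nonpos (hf : IntervalIntegrable f volume a b)
    (hg : IntervalIntegrable g volume a b) (hfg : ∀ x ∈ Set.Icc a b, ∀ y ∈ Set.Icc a b, y < x →
      f x + g y ≤ 0) {h : ℝ} (h0 : 0 < h) (hb : h ≤ b - a) :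
    (∫ x in a + h..b, f x) + ∫ x in a..b - h, g x ≤ 0 := by
  have hab : a ≤ b := by linarith
  have hmem : ∀ c ∈ Set.Icc a b, c ∈ Set.uIcc a b := fun c hc => Set.uIcc_of_le hab ▸ hc
  have hf' : IntervalIntegrable f volume (a + h) b :=
    hf.mono_set <| Set.uIcc_subset_uIcc (hmem _ ⟨by linarith, by linarith⟩) Set.right_mem_uIcc
  have hg' : IntervalIntegrable (fun x => g (x - h)) volume (a + h) b := by
    simpa using (hg.mono_set <| Set.uIcc_subset_uIcc Set.left_mem_uIcc
      (hmem (b - h) ⟨by linarith, by linarith⟩)).comp_sub_right h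
  have hshift : ∫ x in a..b - h, g x = ∫ x in a + h..b, g (x - h) := by
    rw [intervalIntegral.integral_comp_sub_right, add_sub_cancel_right]
  rw [hshift, ← intervalIntegral.integral_add hf' hg']
  calc ∫ x in a + h..b, f x + g (x - h)
      ≤ ∫ _ in a + h..b, (0 : ℝ) :=
        intervalIntegral.integral_mono_on (by linarith) (hf'.add hg') intervalIntegrable_const
          fun x hx => hfg x ⟨by linarith [hx.1], hx.2⟩ (x - h)
            ⟨by linarith [hx.1], by linarith [hx.2]⟩ (by linarith)
    _ = 0 := intervalIntegral.integral_zero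

lemma integral_add_integral_nonpos_of_forall_lt (hab : a < b) (hf : IntervalIntegrable f volume a b)
    (hg : IntervalIntegrable g volume a b) (hfg : ∀ x ∈ Set.Icc a b, ∀ y ∈ Set.Icc a b, y < x →
      f x + g y ≤ 0) :
    (∫ x in a..b, f x) + ∫ x in a..b, g x ≤ 0 := by
  set F : ℝ → ℝ := fun h => (∫ x in a + h..b, f x) + ∫ x in a..b - h, g x
  have hF : ContinuousOn F (Set.Icc 0 (b - a)) := by
    have hmaps : ∀ k : ℝ → ℝ, (∀ h ∈ Set.Icc 0 (b - a), k h ∈ Set.Icc a b) →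
        Set.MapsTo k (Set.Icc 0 (b - a)) (Set.uIcc a b) :=
      fun k hk h hh => Set.uIcc_of_le hab.le ▸ hk h hh
    refine ContinuousOn.add ?_ ?_
    · refine (intervalIntegral.continuousOn_primitive_interval_left
        ((intervalIntegrable_iff' (f := f)).1 hf)).comp
        (continuous_const.add continuous_id).continuousOn (hmaps _ ?_)
      exact fun h hh => ⟨by linarith [hh.1], by linarith [hh.2]⟩
    · refine (intervalIntegral.continuousOn_primitive_interval' hg Set.left_mem_uIcc).comp
        (continuous_const.sub continuous_id).continuousOn (hmaps _ ?_)
      exact fun h hh => ⟨by linarith [hh.2], by linarith [hh.1]⟩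
  have hclosure : (0 : ℝ) ∈ closure (Set.Ioc 0 (b - a)) := by
    rw [closure_Ioc (by linarith)]
    exact Set.left_mem_Icc.2 (by linarith)
  have hF0 : F 0 ≤ 0 :=
    ContinuousWithinAt.closure_le hclosure
      ((hF 0 (Set.left_mem_Icc.2 (by linarith))).mono Set.Ioc_subset_Icc_self)
      continuousWithinAt_const fun h hh =>
        integral_add_integral_shift_nonpos hf hg hfg hh.1 hh.2
  simpa [F] using hF0

end Dual

lemma integral_lam_eq_intervalIntegral (f : ℝ → ℝ) : ∫ x, f x ∂lam = ∫ x in (0 : ℝ)..1, f x := by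
  rw [intervalIntegral.integral_of_le zero_le_one, lam, integral_Icc_eq_integral_Ioc]

lemma intervalIntegrable_of_integrable_lam {f : ℝ → ℝ} (hf : Integrable f lam) :
    IntervalIntegrable f volume 0 1 :=
  (intervalIntegrable_iff_integrableOn_Icc_of_le zero_le_one).2 hf

lemma isGreatest_dual :
    IsGreatest {d : ℝ | ∃ φ ψ : ℝ → ℝ, Integrable φ lam ∧ Integrable ψ lam ∧
      (∀ x ∈ Set.Icc (0 : ℝ) 1, ∀ y ∈ Set.Icc (0 : ℝ) 1,
        ENNReal.ofReal (φ x + ψ y) ≤ cGap (x, y)) ∧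
      d = ∫ x, φ x ∂lam + ∫ y, ψ y ∂lam} 0 := by
  refine ⟨⟨0, 0, integrable_zero _ _ _, integrable_zero _ _ _, by simp, by simp⟩, ?_⟩
  rintro d ⟨φ, ψ, hφ, hψ, hc, rfl⟩
  rw [integral_lam_eq_intervalIntegral, integral_lam_eq_intervalIntegral]
  refine integral_add_integral_nonpos_of_forall_lt zero_lt_one
    (intervalIntegrable_of_integrable_lam hφ) (intervalIntegrable_of_integrable_lam hψ)
    fun x hx y hy hyx => ?_
  simpa [cGap, hyx] using hc x hx y hy

theorem stmt6 :
    sInf {r : ℝ≥0∞ | ∃ π : Measure (ℝ × ℝ), IsProbabilityMeasure π ∧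
        π.fst = lam ∧ π.snd = lam ∧ r = ∫⁻ p, cGap p ∂π} = 1 ∧
    sSup {d : ℝ | ∃ φ ψ : ℝ → ℝ, Integrable φ lam ∧ Integrable ψ lam ∧
        (∀ x ∈ Set.Icc (0 : ℝ) 1, ∀ y ∈ Set.Icc (0 : ℝ) 1,
          ENNReal.ofReal (φ x + ψ y) ≤ cGap (x, y)) ∧
        d = ∫ x, φ x ∂lam + ∫ y, ψ y ∂lam} = 0 :=
  ⟨isLeast_primal.csInf_eq, isGreatest_dual.csSup_eq⟩
end

section
/- In the duality gap example (c = 0 below the diagonal, 1 on the diagonal, ∞ above, on [0,1]² with Lebesgue marginals), the relaxed primal value P^rel = lim_{ε→0} inf{∫ c dπ : ‖π‖ ≥ 1−ε, p_X(π) ≤ λ, p_Y(π) ≤ λ} equals 0. In particular, for each ε > 0, the pushforward of λ restricted to [ε,1] under the map x ↦ (x, x−ε) is a partial transport plan of mass 1−ε with zero cost. -/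
open MeasureTheory ENNReal

lemma cGap_of_lt {p : ℝ × ℝ} (h : p.2 < p.1) : cGap p = 0 := if_pos h

lemma map_sub_const_volume_restrict_Icc (a b c : ℝ) :
    (volume.restrict (Set.Icc a b)).map (· - c) = volume.restrict (Set.Icc (a - c) (b - c)) := by
  have h := ((measurePreserving_sub_right volume c).restrict_preimage
    (measurableSet_Icc (a := a - c) (b := b - c))).map_eq
  rwa [Set.preimage_sub_const_Icc, sub_add_cancel, sub_add_cancel] at h

noncomputable def shiftPlan (ε : ℝ) : Measure (ℝ × ℝ) :=
  (volume.restrict (Set.Icc ε 1)).map (fun x => (x, x - ε))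

lemma measurable_graph_sub_const (ε : ℝ) : Measurable (fun x : ℝ => (x, x - ε)) :=
  measurable_id.prodMk (measurable_sub_const ε)

/-- For `ε > 1` both sides vanish, so the relaxed problems need no case split on `ε`. -/
lemma shiftPlan_univ (ε : ℝ) : shiftPlan ε Set.univ = ENNReal.ofReal (1 - ε) := by
  rw [shiftPlan, Measure.map_apply (measurable_graph_sub_const ε) MeasurableSet.univ]
  simp [Real.volume_Icc]

lemma fst_shiftPlan_le {ε : ℝ} (hε : 0 ≤ ε) : (shiftPlan ε).fst ≤ lam := by
  rw [shiftPlan, Measure.fst_map_prodMk (measurable_sub_const ε), Measure.map_id']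
  exact Measure.restrict_mono (Set.Icc_subset_Icc hε le_rfl) le_rfl

lemma snd_shiftPlan_le {ε : ℝ} (hε : 0 ≤ ε) : (shiftPlan ε).snd ≤ lam := by
  rw [shiftPlan, Measure.snd_map_prodMk measurable_id', map_sub_const_volume_restrict_Icc,
    sub_self]
  exact Measure.restrict_mono (Set.Icc_subset_Icc le_rfl (by linarith)) le_rfl

lemma lintegral_cGap_shiftPlan {ε : ℝ} (hε : 0 < ε) : ∫⁻ p, cGap p ∂shiftPlan ε = 0 := by
  rw [shiftPlan, lintegral_map measurable_cGap (measurable_graph_sub_const ε)]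
  simp [fun x => cGap_of_lt (p := (x, x - ε)) (sub_lt_self x hε)]

theorem stmt7 :
    (⨆ (ε : ℝ) (_ : 0 < ε),
      sInf {r : ℝ≥0∞ | ∃ π : Measure (ℝ × ℝ),
        ENNReal.ofReal (1 - ε) ≤ π Set.univ ∧ π.fst ≤ lam ∧ π.snd ≤ lam ∧
        r = ∫⁻ p, cGap p ∂π}) = 0 ∧
    ∀ ε : ℝ, 0 < ε → ε ≤ 1 →
      ((volume.restrict (Set.Icc ε 1)).map (fun x => (x, x - ε))) Set.univ
          = ENNReal.ofReal (1 - ε) ∧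
      ((volume.restrict (Set.Icc ε 1)).map (fun x => (x, x - ε))).fst ≤ lam ∧
      ((volume.restrict (Set.Icc ε 1)).map (fun x => (x, x - ε))).snd ≤ lam ∧
      ∫⁻ p, cGap p ∂((volume.restrict (Set.Icc ε 1)).map (fun x => (x, x - ε))) = 0 := by
  refine ⟨le_antisymm (iSup₂_le fun ε hε => sInf_le ?_) zero_le, fun ε hε _ => ?_⟩
  · exact ⟨shiftPlan ε, (shiftPlan_univ ε).ge, fst_shiftPlan_le hε.le, snd_shiftPlan_le hε.le,
      (lintegral_cGap_shiftPlan hε).symm⟩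
  · exact ⟨shiftPlan_univ ε, fst_shiftPlan_le hε.le, snd_shiftPlan_le hε.le,
      lintegral_cGap_shiftPlan hε⟩
end

section
/- Compact case of Kellerer's lemma: let λ be Lebesgue measure on [0,1] and let K ⊆ [0,1]² be compact with π(K) = 0 for every π ∈ Π(λ,λ). Then m(K) = 0, where m(K) = inf{λ(A) + λ(B) : K ⊆ (A × [0,1]) ∪ ([0,1] × B)}. Equivalently (contrapositive): if m(K) > 0 then there exists a nonzero nonnegative measure π supported on K whose marginals are dominated by λ. -/
/-!
Suppose every cover `K ⊆ (A × univ) ∪ (univ × B)` has `λ A + λ B ≥ ε`. Cut `[0,1]` into `N`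
intervals `J_i` of length `1/N`. A cover of the bipartite graph `{(i, j) | J_i × J_j meets K}` by
rows `R` and columns `C` gives a cover of `K` with `λ A + λ B ≤ (#R + #C)/N`, so by König's theorem
some permutation `σ` has at least `ε N` of its squares `J_i × J_{σ i}` meeting `K`. Spreading mass
`1/N` uniformly over each square `J_i × J_{σ i}` gives a coupling of `λ` with itself that puts mass
at least `ε` on the `1/N`-neighbourhood of `K`. By Prokhorov's theorem a subsequence of these
couplings converges weakly; the limit is again a coupling, and by the portmanteau theorem it gives
`K` itself mass at least `ε`. So if all couplings vanish on `K`, then `ε = 0`.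
-/

open MeasureTheory ENNReal Equiv Set Filter Topology
open scoped Finset

section Koenig

open Finset

variable {α : Type*} [Fintype α] [DecidableEq α]

theorem exists_injective_le_card_of_forall_le_cover (t : α → Finset α) {k : ℕ}
    (hcov : ∀ R C : Finset α, (∀ i, ∀ j ∈ t i, i ∈ R ∨ j ∈ C) → k ≤ #R + #C) :
    ∃ (S : Finset α) (f : S → α), Function.Injective f ∧ k ≤ #S ∧ ∀ i : S, f i ∈ t i := by
  have hk : k ≤ Fintype.card α := by simpa using hcov univ ∅ (by simp)
  -- Hall's theorem, after adding `card α - k` new vertices adjacent to every `i`.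
  let t' i := (t i).disjSum (univ : Finset (Fin (Fintype.card α - k)))
  have hall : ∀ s : Finset α, #s ≤ #(s.biUnion t') := by
    intro s
    rcases s.eq_empty_or_nonempty with rfl | hs
    · simp
    have hunion : s.biUnion t' = (s.biUnion t).disjSum univ := by
      ext (j | p) <;> simp [t', hs.exists_mem]
    have hcover := hcov sᶜ (s.biUnion t) fun i j hj => by
      by_cases hi : i ∈ s
      · exact .inr (mem_biUnion.2 ⟨i, hi, hj⟩)
      · exact .inl (mem_compl.2 hi)
    rw [hunion, card_disjSum, card_univ, Fintype.card_fin]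
    rw [card_compl] at hcover
    have := card_le_univ s
    omega
  obtain ⟨g, hg, hgt⟩ := (all_card_le_biUnion_card_iff_exists_injective t').1 hall
  have hright : #{i | ¬(g i).isLeft} ≤ Fintype.card α - k := by
    simpa using card_le_card_of_injOn g (t := univ.map .inr) (fun i hi => by
      obtain ⟨p, hp⟩ := Sum.isRight_iff.1 (by simpa using (mem_filter.1 hi).2)
      simp [hp]) hg.injOn
  have hsplit := card_filter_add_card_filter_not (s := univ) fun i => (g i).isLeft
  have hg' (i : ({i | (g i).isLeft} : Finset α)) :
      Sum.inl ((g i).getLeft (mem_filter.1 i.2).2) = g i :=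
    Sum.inl_getLeft _ _
  refine ⟨({i | (g i).isLeft} : Finset α), fun i => (g i).getLeft (mem_filter.1 i.2).2,
    fun i j hij => ?_, ?_, ?_⟩
  · exact Subtype.ext (hg (by rw [← hg' i, ← hg' j]; exact congrArg Sum.inl hij))
  · rw [card_univ] at hsplit
    omega
  · intro i
    have := hgt i
    rw [← hg' i] at this
    exact inl_mem_disjSum.1 this

theorem exists_perm_le_card_of_forall_le_cover (t : α → Finset α) {k : ℕ}
    (hcov : ∀ R C : Finset α, (∀ i, ∀ j ∈ t i, i ∈ R ∨ j ∈ C) → k ≤ #R + #C) :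
    ∃ σ : Perm α, k ≤ #{i | σ i ∈ t i} := by
  obtain ⟨S, f, hf, hkS, hft⟩ := exists_injective_le_card_of_forall_le_cover t hcov
  obtain ⟨σ, hσ⟩ := Perm.exists_extending_pair Subtype.val f Subtype.val_injective hf
  refine ⟨σ, hkS.trans (card_le_card fun i hi => ?_)⟩
  simpa [hσ ⟨i, hi⟩] using hft ⟨i, hi⟩

theorem exists_cover_perm_card_le (t : α → Finset α) :
    ∃ R C : Finset α, (∀ i, ∀ j ∈ t i, i ∈ R ∨ j ∈ C) ∧
      ∃ σ : Perm α, #R + #C ≤ #{i | σ i ∈ t i} := by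
  classical
  obtain ⟨⟨R, C⟩, hRC, hmin⟩ :=
    ({p : Finset α × Finset α | ∀ i, ∀ j ∈ t i, i ∈ p.1 ∨ j ∈ p.2} : Finset _).exists_min_image
      (fun p => #p.1 + #p.2) ⟨(univ, ∅), by simp⟩
  refine ⟨R, C, (mem_filter.1 hRC).2, exists_perm_le_card_of_forall_le_cover t fun R' C' h => ?_⟩
  exact hmin (R', C') (mem_filter.2 ⟨mem_univ _, h⟩)

end Koenig

theorem sum_restrict_Ico_eq {α : Type*} [LinearOrder α] [MeasurableSpace α] [TopologicalSpace α]
    [OrderClosedTopology α] [OpensMeasurableSpace α] (μ : Measure α) {a : ℕ → α}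
    (ha : Monotone a) (n : ℕ) :
    ∑ i ∈ Finset.range n, μ.restrict (Ico (a i) (a (i + 1))) = μ.restrict (Ico (a 0) (a n)) := by
  induction n with
  | zero => simp
  | succ n ih =>
    rw [Finset.sum_range_succ, ih, ← Measure.restrict_union Ico_disjoint_Ico_same measurableSet_Ico,
      Ico_union_Ico_eq_Ico (ha n.zero_le) (ha n.le_succ)]

noncomputable def gridCell (N i : ℕ) : Set ℝ := Icc (i / N) ((i + 1) / N)

section Grid

variable {N : ℕ} [NeZero N]

theorem volume_gridCell (i : ℕ) : volume (gridCell N i) = (N : ℝ≥0∞)⁻¹ := by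
  rw [gridCell, Real.volume_Icc, ← sub_div, add_sub_cancel_left, one_div,
    ENNReal.ofReal_inv_of_pos (by simp [Nat.pos_of_neZero]), ofReal_natCast]

theorem exists_mem_gridCell {x : ℝ} (hx : x ∈ Icc (0 : ℝ) 1) : ∃ i : Fin N, x ∈ gridCell N i := by
  have hN : (0 : ℝ) < N := by simp [Nat.pos_of_neZero]
  refine ⟨⟨min ⌊x * N⌋₊ (N - 1), by have := Nat.pos_of_neZero N; omega⟩, ?_, ?_⟩
  · rw [Fin.val_mk, div_le_iff₀ hN]
    exact (Nat.cast_le.2 (min_le_left _ _)).trans (Nat.floor_le (by have := hx.1; positivity))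
  · rw [Fin.val_mk, le_div_iff₀ hN]
    rcases le_total ⌊x * N⌋₊ (N - 1) with h | h
    · rw [min_eq_left h]
      exact (Nat.lt_floor_add_one _).le
    · rw [min_eq_right h, Nat.cast_sub (Nat.one_le_of_lt (Nat.pos_of_neZero N))]
      nlinarith [hx.2, Nat.cast_one (R := ℝ)]

theorem sum_restrict_gridCell :
    ∑ i : Fin N, volume.restrict (gridCell N i) = volume.restrict (Icc (0 : ℝ) 1) := by
  have hN : (N : ℝ) ≠ 0 := by simp [NeZero.ne]
  have hmono : Monotone fun i : ℕ => (i : ℝ) / N :=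
    fun i j hij => div_le_div_of_nonneg_right (by exact_mod_cast hij) (Nat.cast_nonneg N)
  have := sum_restrict_Ico_eq volume hmono N
  simp only [Nat.cast_zero, zero_div, div_self hN, Nat.cast_succ] at this
  rw [Measure.restrict_congr_set Ico_ae_eq_Icc.symm, ← this, ← Fin.sum_univ_eq_sum_range]
  exact Finset.sum_congr rfl fun i _ => Measure.restrict_congr_set Ico_ae_eq_Icc.symm

theorem volume_biUnion_gridCell_le (R : Finset (Fin N)) :
    volume (⋃ i ∈ R, gridCell N i) ≤ #R / N := by
  calc volume (⋃ i ∈ R, gridCell N i) ≤ ∑ i ∈ R, volume (gridCell N i) :=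
        measure_biUnion_finset_le R _
    _ = #R / N := by simp [volume_gridCell, div_eq_mul_inv]

end Grid

theorem gridCell_prod_subset_cthickening {N i j : ℕ} {K : Set (ℝ × ℝ)}
    (h : (gridCell N i ×ˢ gridCell N j ∩ K).Nonempty) :
    gridCell N i ×ˢ gridCell N j ⊆ Metric.cthickening (N : ℝ)⁻¹ K := by
  obtain ⟨q, hq, hqK⟩ := h
  have hdist : ∀ k : ℕ, ∀ x ∈ gridCell N k, ∀ y ∈ gridCell N k, dist x y ≤ (N : ℝ)⁻¹ := by
    intro k x hx y hy
    refine (Real.dist_le_of_mem_Icc hx hy).trans_eq ?_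
    rw [← sub_div, add_sub_cancel_left, one_div]
  exact fun p hp => Metric.mem_cthickening_of_dist_le p q _ K hqK
    (max_le (hdist i _ hp.1 _ hq.1) (hdist j _ hp.2 _ hq.2))

noncomputable def checkerboard (N : ℕ) (σ : Perm (Fin N)) : Measure (ℝ × ℝ) :=
  ∑ i : Fin N,
    (N : ℝ≥0∞) • (volume.restrict (gridCell N i)).prod (volume.restrict (gridCell N (σ i)))

section Checkerboard

variable {N : ℕ} [NeZero N] (σ : Perm (Fin N))

theorem natCast_mul_volume_gridCell (i : ℕ) : (N : ℝ≥0∞) * volume (gridCell N i) = 1 := by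
  rw [volume_gridCell, ENNReal.mul_inv_cancel (by simp [NeZero.ne]) (natCast_ne_top N)]

theorem fst_checkerboard : (checkerboard N σ).fst = volume.restrict (Icc (0 : ℝ) 1) := by
  rw [← sum_restrict_gridCell (N := N), checkerboard, Measure.fst,
    Measure.map_finset_sum' measurable_fst.aemeasurable]
  refine Finset.sum_congr rfl fun i _ => ?_
  rw [Measure.map_smul, Measure.map_fst_prod, Measure.restrict_apply_univ, smul_smul,
    natCast_mul_volume_gridCell, one_smul]

theorem snd_checkerboard : (checkerboard N σ).snd = volume.restrict (Icc (0 : ℝ) 1) := by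
  rw [← sum_restrict_gridCell (N := N), checkerboard, Measure.snd,
    Measure.map_finset_sum' measurable_snd.aemeasurable,
    ← Equiv.sum_comp σ fun j : Fin N => volume.restrict (gridCell N j)]
  refine Finset.sum_congr rfl fun i _ => ?_
  rw [Measure.map_smul, Measure.map_snd_prod, Measure.restrict_apply_univ, smul_smul,
    natCast_mul_volume_gridCell, one_smul]

instance : IsProbabilityMeasure (checkerboard N σ) := by
  constructor
  rw [← Measure.fst_univ, fst_checkerboard, Measure.restrict_apply_univ, Real.volume_Icc]
  simp

open Classical in
theorem card_div_le_checkerboard (U : Set (ℝ × ℝ)) :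
    (#{i : Fin N | gridCell N i ×ˢ gridCell N (σ i) ⊆ U} : ℝ≥0∞) / N ≤ checkerboard N σ U := by
  rw [checkerboard, Measure.coe_finsetSum, Finset.sum_apply, div_eq_mul_inv,
    Finset.card_eq_sum_ones, Nat.cast_sum, Finset.sum_mul, Finset.sum_filter]
  refine Finset.sum_le_sum fun i _ => ?_
  split_ifs with hU
  · rw [Measure.smul_apply, smul_eq_mul, Nat.cast_one, one_mul]
    calc (N : ℝ≥0∞)⁻¹
        = N * ((volume.restrict (gridCell N i)).prod (volume.restrict (gridCell N (σ i))))
            (gridCell N i ×ˢ gridCell N (σ i)) := by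
          rw [Measure.prod_prod, Measure.restrict_apply_self, Measure.restrict_apply_self,
            ← mul_assoc, natCast_mul_volume_gridCell, one_mul, volume_gridCell]
      _ ≤ _ := by gcongr
  · simp

end Checkerboard

theorem exists_perm_le_checkerboard_cthickening {K : Set (ℝ × ℝ)}
    (hKsub : K ⊆ Icc (0 : ℝ) 1 ×ˢ Icc (0 : ℝ) 1) {ε : ℝ≥0∞}
    (hε : ∀ A B : Set ℝ, MeasurableSet A → MeasurableSet B → K ⊆ A ×ˢ univ ∪ univ ×ˢ B →
      ε ≤ volume.restrict (Icc (0 : ℝ) 1) A + volume.restrict (Icc (0 : ℝ) 1) B)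
    (N : ℕ) [NeZero N] :
    ∃ σ : Perm (Fin N), ε ≤ checkerboard N σ (Metric.cthickening (N : ℝ)⁻¹ K) := by
  classical
  set t : Fin N → Finset (Fin N) := fun i => {j | (gridCell N i ×ˢ gridCell N j ∩ K).Nonempty}
  obtain ⟨R, C, hcover, σ, hcard⟩ := exists_cover_perm_card_le t
  refine ⟨σ, ?_⟩
  have hK : K ⊆ (⋃ i ∈ R, gridCell N i) ×ˢ univ ∪ univ ×ˢ (⋃ j ∈ C, gridCell N j) := by
    rintro ⟨x, y⟩ hxy
    obtain ⟨i, hi⟩ := exists_mem_gridCell (N := N) (hKsub hxy).1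
    obtain ⟨j, hj⟩ := exists_mem_gridCell (N := N) (hKsub hxy).2
    rcases hcover i j (by simpa [t] using ⟨(x, y), ⟨hi, hj⟩, hxy⟩) with h | h
    · exact .inl ⟨mem_biUnion h hi, trivial⟩
    · exact .inr ⟨trivial, mem_biUnion h hj⟩
  calc ε ≤ volume.restrict (Icc (0 : ℝ) 1) (⋃ i ∈ R, gridCell N i)
        + volume.restrict (Icc (0 : ℝ) 1) (⋃ j ∈ C, gridCell N j) :=
        hε _ _ (R.measurableSet_biUnion fun _ _ => measurableSet_Icc)
          (C.measurableSet_biUnion fun _ _ => measurableSet_Icc) hK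
    _ ≤ #R / N + #C / N := add_le_add
        ((Measure.restrict_apply_le _ _).trans (volume_biUnion_gridCell_le R))
        ((Measure.restrict_apply_le _ _).trans (volume_biUnion_gridCell_le C))
    _ = (#R + #C : ℕ) / N := by rw [ENNReal.div_add_div_same, Nat.cast_add]
    _ ≤ #{i | σ i ∈ t i} / N := by gcongr
    _ ≤ #{i : Fin N | gridCell N i ×ˢ gridCell N (σ i) ⊆ Metric.cthickening (N : ℝ)⁻¹ K} / N := by
        gcongr with i
        exact fun hi => gridCell_prod_subset_cthickening (by simpa [t] using hi)
    _ ≤ checkerboard N σ (Metric.cthickening (N : ℝ)⁻¹ K) := card_div_le_checkerboard σ _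

theorem isCompact_setOf_measure_compl_eq_zero {E : Type*} [MeasurableSpace E] [TopologicalSpace E]
    [T2Space E] [BorelSpace E] {Q : Set E} (hQ : IsCompact Q) :
    IsCompact {μ : ProbabilityMeasure E | (μ : Measure E) Qᶜ = 0} := by
  convert isCompact_setOfPred_probabilityMeasure_mass_eq_compl_isCompact_le (u := 0)
    (K := fun _ => Q) tendsto_const_nhds (fun _ => hQ) (.inr monotone_const) using 3
  simp

theorem measure_compl_prod_eq_zero {X Y : Type*} [MeasurableSpace X] [MeasurableSpace Y]
    {ρ : Measure (X × Y)} {s : Set X} {t : Set Y} (hs : MeasurableSet s) (ht : MeasurableSet t)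
    (hρs : ρ.fst sᶜ = 0) (hρt : ρ.snd tᶜ = 0) : ρ (s ×ˢ t)ᶜ = 0 := by
  rw [Set.compl_prod_eq_union]
  refine measure_union_null ?_ ?_
  · rwa [prod_univ, ← Measure.fst_apply hs.compl]
  · rwa [univ_prod, ← Measure.snd_apply ht.compl]

theorem isClosed_setOf_map_eq {Ω Ω' : Type*} [TopologicalSpace Ω] [MeasurableSpace Ω]
    [OpensMeasurableSpace Ω] [PseudoEMetricSpace Ω'] [MeasurableSpace Ω'] [BorelSpace Ω']
    {f : Ω → Ω'} (hf : Continuous f) (ρ : Measure Ω') :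
    IsClosed {μ : ProbabilityMeasure Ω | (μ : Measure Ω).map f = ρ} := by
  have hρ : {ρ' : ProbabilityMeasure Ω' | (ρ' : Measure Ω') = ρ}.Subsingleton :=
    fun ρ₁ h₁ ρ₂ h₂ => ProbabilityMeasure.toMeasure_injective (h₁.trans h₂.symm)
  convert hρ.isClosed.preimage (ProbabilityMeasure.continuous_map hf) using 2
  simp

theorem isCompact_setOf_fst_eq_snd_eq {X Y : Type*} [MetricSpace X] [SecondCountableTopology X]
    [MeasurableSpace X] [BorelSpace X] [MetricSpace Y] [SecondCountableTopology Y]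
    [MeasurableSpace Y] [BorelSpace Y] {μ : Measure X} {ν : Measure Y} {s : Set X} {t : Set Y}
    (hs : IsCompact s) (ht : IsCompact t) (hμ : μ sᶜ = 0) (hν : ν tᶜ = 0) :
    IsCompact {π : ProbabilityMeasure (X × Y) |
      (π : Measure (X × Y)).fst = μ ∧ (π : Measure (X × Y)).snd = ν} := by
  refine (isCompact_setOf_measure_compl_eq_zero (hs.prod ht)).of_isClosed_subset ?_ ?_
  · exact (isClosed_setOf_map_eq continuous_fst μ).inter (isClosed_setOf_map_eq continuous_snd ν)
  · rintro π ⟨hfst, hsnd⟩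
    exact measure_compl_prod_eq_zero hs.measurableSet ht.measurableSet (hfst ▸ hμ) (hsnd ▸ hν)

theorem le_measure_of_tendsto_of_forall_cthickening {Ω ι : Type*} [PseudoEMetricSpace Ω]
    [MeasurableSpace Ω] [OpensMeasurableSpace Ω] {L : Filter ι} [L.NeBot]
    {μs : ι → ProbabilityMeasure Ω} {μ : ProbabilityMeasure Ω} (hμ : Tendsto μs L (𝓝 μ))
    {K : Set Ω} (hK : IsClosed K) {ε : ℝ≥0∞}
    (h : ∀ δ > 0, ∀ᶠ i in L, ε ≤ (μs i : Measure Ω) (Metric.cthickening δ K)) :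
    ε ≤ (μ : Measure Ω) K := by
  have hδ : ∀ δ > 0, ε ≤ (μ : Measure Ω) (Metric.cthickening δ K) := fun δ hδ =>
    (le_limsup_of_frequently_le (h δ hδ).frequently).trans
      (ProbabilityMeasure.limsup_measure_closed_le_of_tendsto hμ Metric.isClosed_cthickening)
  exact ge_of_tendsto ((tendsto_measure_cthickening_of_isClosed
    ⟨1, one_pos, measure_ne_top _ _⟩ hK).mono_left (nhdsWithin_le_nhds (s := Ioi 0)))
    (eventually_nhdsWithin_of_forall fun δ hδ' => hδ δ hδ')

theorem exists_coupling_le_measure {K : Set (ℝ × ℝ)} (hK : IsClosed K)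
    (hKsub : K ⊆ Icc (0 : ℝ) 1 ×ˢ Icc (0 : ℝ) 1) {ε : ℝ≥0∞}
    (hε : ∀ A B : Set ℝ, MeasurableSet A → MeasurableSet B → K ⊆ A ×ˢ univ ∪ univ ×ˢ B →
      ε ≤ volume.restrict (Icc (0 : ℝ) 1) A + volume.restrict (Icc (0 : ℝ) 1) B) :
    ∃ π : ProbabilityMeasure (ℝ × ℝ), (π : Measure (ℝ × ℝ)).fst = volume.restrict (Icc 0 1) ∧
      (π : Measure (ℝ × ℝ)).snd = volume.restrict (Icc 0 1) ∧ ε ≤ (π : Measure (ℝ × ℝ)) K := by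
  choose σ hσ using fun n : ℕ => exists_perm_le_checkerboard_cthickening hKsub hε (n + 1)
  let ν (n : ℕ) : ProbabilityMeasure (ℝ × ℝ) := ⟨checkerboard (n + 1) (σ n), inferInstance⟩
  obtain ⟨π, ⟨hfst, hsnd⟩, φ, hφ, hlim⟩ :=
    (isCompact_setOf_fst_eq_snd_eq (s := Icc (0 : ℝ) 1) (t := Icc (0 : ℝ) 1) isCompact_Icc
      isCompact_Icc (by simp) (by simp)).tendsto_subseq
      fun n => show ν n ∈ _ from ⟨fst_checkerboard (σ n), snd_checkerboard (σ n)⟩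
  have hmesh : Tendsto (fun n : ℕ => ((n + 1 : ℕ) : ℝ)⁻¹) atTop (𝓝 0) := by
    simpa using tendsto_one_div_add_atTop_nhds_zero_nat (𝕜 := ℝ)
  refine ⟨π, hfst, hsnd, le_measure_of_tendsto_of_forall_cthickening hlim hK fun δ hδ => ?_⟩
  filter_upwards [hφ.tendsto_atTop.eventually (hmesh.eventually (gt_mem_nhds hδ))] with n hn
  exact (hσ (φ n)).trans (measure_mono (Metric.cthickening_mono hn.le K))

theorem stmt14
    (K : Set (ℝ × ℝ)) (hK : IsCompact K)
    (hKsub : K ⊆ Set.Icc (0 : ℝ) 1 ×ˢ Set.Icc (0 : ℝ) 1)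
    (hnull : ∀ π : Measure (ℝ × ℝ), IsProbabilityMeasure π →
      π.fst = volume.restrict (Set.Icc (0 : ℝ) 1) →
      π.snd = volume.restrict (Set.Icc (0 : ℝ) 1) → π K = 0) :
    sInf {r : ℝ≥0∞ | ∃ (A B : Set ℝ), MeasurableSet A ∧ MeasurableSet B ∧
      K ⊆ (A ×ˢ Set.univ) ∪ (Set.univ ×ˢ B) ∧
      r = volume.restrict (Set.Icc (0 : ℝ) 1) A + volume.restrict (Set.Icc (0 : ℝ) 1) B} = 0 := by
  generalize hS : {r : ℝ≥0∞ | _} = S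
  obtain ⟨π, hfst, hsnd, hπK⟩ := exists_coupling_le_measure hK.isClosed hKsub (ε := sInf S)
    fun A B hA hB hAB => sInf_le (hS ▸ ⟨A, B, hA, hB, hAB, rfl⟩)
  exact le_zero_iff.1 (hnull π inferInstance hfst hsnd ▸ hπK)
end

section
/- Comparison of m and γ: for any set L ⊆ [0,1]², define m(L) = inf{λ(A)+λ(B) : L ⊆ (A×[0,1]) ∪ ([0,1]×B)} and γ(L) = inf{∫ f dλ : f : [0,1] → [0,1], f(x)+f(y) ≥ 1_L(x,y) for all (x,y)}. Then γ(L) ≤ m(L) ≤ 4γ(L). -/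
open MeasureTheory ENNReal

/-!
A cross cover `(A, B)` of `L` gives the admissible weight `1_{A ∪ B}`, so `γ ≤ m`. Conversely, an
admissible weight `f` has `f x ≥ 1/2` or `f y ≥ 1/2` at every `(x, y) ∈ L`, so `A = B = {f ≥ 1/2}`
is a cross cover, and by Markov's inequality `μ A ≤ 2 ∫ f`; hence `m ≤ 4 γ`.
-/

open Set

section

variable {α : Type*}

lemma indicator_mem_Icc (s : Set α) (x : α) : s.indicator (fun _ ↦ (1 : ℝ)) x ∈ Icc 0 1 := by
  by_cases hx : x ∈ s <;> simp [hx]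

lemma one_le_indicator_add_indicator {L : Set (α × α)} {A B : Set α}
    (hL : L ⊆ (A ×ˢ univ) ∪ (univ ×ˢ B)) {x y : α} (hxy : (x, y) ∈ L) :
    1 ≤ (A ∪ B).indicator (fun _ ↦ (1 : ℝ)) x + (A ∪ B).indicator (fun _ ↦ (1 : ℝ)) y := by
  have hx := (indicator_mem_Icc (A ∪ B) x).1
  have hy := (indicator_mem_Icc (A ∪ B) y).1
  rcases hL hxy with ⟨hA, -⟩ | ⟨-, hB⟩
  · rw [indicator_of_mem (mem_union_left B hA)]
    linarith
  · rw [indicator_of_mem (mem_union_right A hB)]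
    linarith

lemma subset_superlevel_prod_union {L : Set (α × α)} {f : α → ℝ}
    (hf : ∀ x y, (x, y) ∈ L → 1 ≤ f x + f y) :
    L ⊆ ({x | 1 / 2 ≤ f x} ×ˢ univ) ∪ (univ ×ˢ {x | 1 / 2 ≤ f x}) := by
  rintro ⟨x, y⟩ hxy
  by_cases hx : 1 / 2 ≤ f x
  · exact .inl ⟨hx, trivial⟩
  · exact .inr ⟨trivial, show 1 / 2 ≤ f y by linarith [hf x y hxy]⟩

variable [MeasurableSpace α]

/-- The quantity `m(L)` of the paper, with an arbitrary measure `μ` in place of `λ`. -/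
noncomputable def crossCoverNumber (μ : Measure α) (L : Set (α × α)) : ℝ≥0∞ :=
  sInf {r | ∃ A B : Set α, MeasurableSet A ∧ MeasurableSet B ∧
    L ⊆ (A ×ˢ univ) ∪ (univ ×ˢ B) ∧ r = μ A + μ B}

/-- The quantity `γ(L)` of the paper, with an arbitrary measure `μ` in place of `λ`. -/
noncomputable def fractionalCrossCoverNumber (μ : Measure α) (L : Set (α × α)) : ℝ≥0∞ :=
  sInf {r | ∃ f : α → ℝ, Measurable f ∧ (∀ x, f x ∈ Icc 0 1) ∧
    (∀ x y, (x, y) ∈ L → 1 ≤ f x + f y) ∧ r = ENNReal.ofReal (∫ x, f x ∂μ)}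

lemma measure_superlevel_half_le {μ : Measure α} [IsFiniteMeasure μ] {f : α → ℝ}
    (hf : Measurable f) (hf01 : ∀ x, f x ∈ Icc 0 1) :
    μ {x | 1 / 2 ≤ f x} ≤ 2 * ENNReal.ofReal (∫ x, f x ∂μ) := by
  have hint : Integrable f μ := .of_bound hf.aestronglyMeasurable 1 <| .of_forall fun x ↦ by
    rw [Real.norm_of_nonneg (hf01 x).1]
    exact (hf01 x).2
  have hmarkov := mul_meas_ge_le_integral_of_nonneg (.of_forall fun x ↦ (hf01 x).1) hint (1 / 2)
  calc μ {x | 1 / 2 ≤ f x} = ENNReal.ofReal (μ.real {x | 1 / 2 ≤ f x}) := (ofReal_measureReal).symm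
    _ ≤ ENNReal.ofReal (2 * ∫ x, f x ∂μ) := ofReal_le_ofReal (by linarith)
    _ = 2 * ENNReal.ofReal (∫ x, f x ∂μ) := by rw [ofReal_mul zero_le_two, ofReal_ofNat]

theorem fractionalCrossCoverNumber_le_crossCoverNumber (μ : Measure α) (L : Set (α × α)) :
    fractionalCrossCoverNumber μ L ≤ crossCoverNumber μ L := by
  refine le_sInf ?_
  rintro _ ⟨A, B, hA, hB, hL, rfl⟩
  refine sInf_le_of_le ⟨(A ∪ B).indicator fun _ ↦ 1, measurable_const.indicator (hA.union hB),
    indicator_mem_Icc _, fun _ _ ↦ one_le_indicator_add_indicator hL, rfl⟩ ?_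
  calc ENNReal.ofReal (∫ x, (A ∪ B).indicator (fun _ ↦ (1 : ℝ)) x ∂μ)
      = ENNReal.ofReal (μ (A ∪ B)).toReal := by
        rw [integral_indicator_const _ (hA.union hB), smul_eq_mul, mul_one, measureReal_def]
    _ ≤ μ (A ∪ B) := ofReal_toReal_le
    _ ≤ μ A + μ B := measure_union_le A B

theorem crossCoverNumber_le_four_mul_fractionalCrossCoverNumber (μ : Measure α)
    [IsFiniteMeasure μ] (L : Set (α × α)) :
    crossCoverNumber μ L ≤ 4 * fractionalCrossCoverNumber μ L := by
  rw [mul_comm, ← ENNReal.div_le_iff four_ne_zero ofNat_ne_top]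
  refine le_sInf ?_
  rintro _ ⟨f, hf, hf01, hfL, rfl⟩
  rw [ENNReal.div_le_iff four_ne_zero ofNat_ne_top]
  have hA : MeasurableSet {x | 1 / 2 ≤ f x} := measurableSet_le measurable_const hf
  refine sInf_le_of_le ⟨_, _, hA, hA, subset_superlevel_prod_union hfL, rfl⟩ ?_
  calc μ {x | 1 / 2 ≤ f x} + μ {x | 1 / 2 ≤ f x}
      ≤ 2 * ENNReal.ofReal (∫ x, f x ∂μ) + 2 * ENNReal.ofReal (∫ x, f x ∂μ) := by
        gcongr <;> exact measure_superlevel_half_le hf hf01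
    _ = ENNReal.ofReal (∫ x, f x ∂μ) * 4 := by ring

end

theorem stmt16_general (L : Set (ℝ × ℝ)) :
    sInf {r : ℝ≥0∞ | ∃ f : ℝ → ℝ, Measurable f ∧ (∀ x, f x ∈ Set.Icc (0 : ℝ) 1) ∧
        (∀ x y, (x, y) ∈ L → 1 ≤ f x + f y) ∧
        r = ENNReal.ofReal (∫ x in Set.Icc (0 : ℝ) 1, f x)}
      ≤ sInf {r : ℝ≥0∞ | ∃ (A B : Set ℝ), MeasurableSet A ∧ MeasurableSet B ∧
          L ⊆ (A ×ˢ Set.univ) ∪ (Set.univ ×ˢ B) ∧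
          r = volume.restrict (Set.Icc (0 : ℝ) 1) A + volume.restrict (Set.Icc (0 : ℝ) 1) B} ∧
    sInf {r : ℝ≥0∞ | ∃ (A B : Set ℝ), MeasurableSet A ∧ MeasurableSet B ∧
        L ⊆ (A ×ˢ Set.univ) ∪ (Set.univ ×ˢ B) ∧
        r = volume.restrict (Set.Icc (0 : ℝ) 1) A + volume.restrict (Set.Icc (0 : ℝ) 1) B}
      ≤ 4 * sInf {r : ℝ≥0∞ | ∃ f : ℝ → ℝ, Measurable f ∧ (∀ x, f x ∈ Set.Icc (0 : ℝ) 1) ∧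
          (∀ x y, (x, y) ∈ L → 1 ≤ f x + f y) ∧
          r = ENNReal.ofReal (∫ x in Set.Icc (0 : ℝ) 1, f x)} :=
  ⟨fractionalCrossCoverNumber_le_crossCoverNumber _ L,
    crossCoverNumber_le_four_mul_fractionalCrossCoverNumber _ L⟩

theorem stmt16 (L : Set (ℝ × ℝ))
    (hLsub : L ⊆ Set.Icc (0 : ℝ) 1 ×ˢ Set.Icc (0 : ℝ) 1) :
    sInf {r : ℝ≥0∞ | ∃ f : ℝ → ℝ, Measurable f ∧ (∀ x, f x ∈ Set.Icc (0 : ℝ) 1) ∧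
        (∀ x y, (x, y) ∈ L → 1 ≤ f x + f y) ∧
        r = ENNReal.ofReal (∫ x in Set.Icc (0 : ℝ) 1, f x)}
      ≤ sInf {r : ℝ≥0∞ | ∃ (A B : Set ℝ), MeasurableSet A ∧ MeasurableSet B ∧
          L ⊆ (A ×ˢ Set.univ) ∪ (Set.univ ×ˢ B) ∧
          r = volume.restrict (Set.Icc (0 : ℝ) 1) A + volume.restrict (Set.Icc (0 : ℝ) 1) B} ∧
    sInf {r : ℝ≥0∞ | ∃ (A B : Set ℝ), MeasurableSet A ∧ MeasurableSet B ∧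
        L ⊆ (A ×ˢ Set.univ) ∪ (Set.univ ×ˢ B) ∧
        r = volume.restrict (Set.Icc (0 : ℝ) 1) A + volume.restrict (Set.Icc (0 : ℝ) 1) B}
      ≤ 4 * sInf {r : ℝ≥0∞ | ∃ f : ℝ → ℝ, Measurable f ∧ (∀ x, f x ∈ Set.Icc (0 : ℝ) 1) ∧
          (∀ x y, (x, y) ∈ L → 1 ≤ f x + f y) ∧
          r = ENNReal.ofReal (∫ x in Set.Icc (0 : ℝ) 1, f x)} :=
  stmt16_general L
end

section
/- Continuity from below of γ: the set function γ(L) := inf{∫ f dλ : f : [0,1] → [0,1] measurable, f(x)+f(y) ≥ 1_L(x,y) for all (x,y) ∈ [0,1]²} satisfies: for every increasing sequence of sets A₁ ⊆ A₂ ⊆ ⋯ ⊆ [0,1]² with union A, one has sup_n γ(A_n) = γ(A). -/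
/-!
Monotonicity of `γ` gives one inequality. For the other, pick covers `fₙ` of `Aₙ` whose
integrals are almost `supₙ γ(Aₙ)`. In `L²` the convex hulls of the tails `{fₖ : k ≥ n}`
decrease, and by the parallelogram law elements of almost minimal norm in them form a Cauchy
sequence, so some forward convex combinations `uᵢ ∈ conv {fₖ : k ≥ i}` converge a.e.
Each `uᵢ` still covers `Aᵢ` and has small integral, hence `limsup uᵢ` covers `⋃ Aₙ`, and by
dominated convergence its integral is at most `supₙ γ(Aₙ)` plus an arbitrarily small error.
-/

open MeasureTheory ENNReal Filter Topology Set

theorem norm_sub_le_sqrt_of_le_norm_midpoint {E : Type*} [NormedAddCommGroup E]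
    [InnerProductSpace ℝ E] {a b : E} {r s : ℝ} (ha : ‖a‖ ≤ r) (hb : ‖b‖ ≤ r) (hs : 0 ≤ s)
    (hmid : s ≤ ‖(1 / 2 : ℝ) • a + (1 / 2 : ℝ) • b‖) : ‖a - b‖ ≤ √(4 * (r ^ 2 - s ^ 2)) := by
  rw [← smul_add, norm_smul] at hmid
  norm_num at hmid
  have hpar := parallelogram_law_with_norm ℝ a b
  rw [← abs_norm]
  refine Real.abs_le_sqrt ?_
  nlinarith [norm_nonneg a, norm_nonneg b]

theorem exists_cauchySeq_mem_of_antitone_convex {E : Type*} [NormedAddCommGroup E]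
    [InnerProductSpace ℝ E] {K : ℕ → Set E} (hanti : Antitone K) (hconv : ∀ m, Convex ℝ (K m))
    (hne : ∀ m, (K m).Nonempty) (hbdd : Bornology.IsBounded (K 0)) :
    ∃ w : ℕ → E, (∀ m, w m ∈ K m) ∧ CauchySeq w := by
  obtain ⟨C, hC⟩ := isBounded_iff_forall_norm_le.1 hbdd
  have (m : ℕ) : Nonempty (K m) := (hne m).to_subtype
  set d : ℕ → ℝ := fun m => ⨅ x : K m, ‖(x : E)‖
  have hd_le {m : ℕ} {x : E} (hx : x ∈ K m) : d m ≤ ‖x‖ :=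
    ciInf_le ⟨0, by rintro _ ⟨y, rfl⟩; exact norm_nonneg _⟩ (⟨x, hx⟩ : K m)
  have hd_mono : Monotone d := fun m l hml => le_ciInf fun x => hd_le (hanti hml x.2)
  have hd_bdd : BddAbove (range d) := by
    refine ⟨C, ?_⟩
    rintro _ ⟨m, rfl⟩
    obtain ⟨x, hx⟩ := hne m
    exact (hd_le hx).trans (hC x (hanti (Nat.zero_le m) hx))
  set D := ⨆ m, d m
  have hw (m : ℕ) : ∃ w ∈ K m, ‖w‖ < D + 1 / (m + 1) := by
    obtain ⟨⟨w, hw⟩, hlt⟩ := exists_lt_of_ciInf_lt <|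
      (le_ciSup hd_bdd m).trans_lt (lt_add_of_pos_right D Nat.one_div_pos_of_nat)
    exact ⟨w, hw, hlt⟩
  choose w hwK hwD using hw
  refine ⟨w, hwK, cauchySeq_of_le_tendsto_0
    (fun M => √(4 * ((D + 1 / (M + 1)) ^ 2 - d M ^ 2))) (fun m l M hm hl => ?_) ?_⟩
  · have hD_le {n : ℕ} (hn : M ≤ n) : ‖w n‖ ≤ D + 1 / (M + 1) := by
      refine (hwD n).le.trans ?_
      gcongr
    rw [dist_eq_norm]
    exact norm_sub_le_sqrt_of_le_norm_midpoint (hD_le hm) (hD_le hl)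
      (le_ciInf fun x => norm_nonneg _)
      (hd_le (hconv M (hanti hm (hwK m)) (hanti hl (hwK l)) (by norm_num) (by norm_num)
        (by norm_num)))
  · have hlim : Tendsto (fun M : ℕ => 4 * ((D + 1 / (M + 1)) ^ 2 - d M ^ 2)) atTop
        (𝓝 (4 * ((D + 0) ^ 2 - D ^ 2))) :=
      (((tendsto_one_div_add_atTop_nhds_zero_nat.const_add D).pow 2).sub
        ((tendsto_atTop_ciSup hd_mono hd_bdd).pow 2)).const_mul 4
    simpa using hlim.sqrt

theorem exists_tendsto_ae_of_mem_convexHull_tail {α : Type*} [MeasurableSpace α] {μ : Measure α}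
    [IsFiniteMeasure μ] {f : ℕ → α → ℝ} {C : ℝ} (hmeas : ∀ n, AEStronglyMeasurable (f n) μ)
    (hbound : ∀ n x, ‖f n x‖ ≤ C) :
    ∃ u : ℕ → α → ℝ, (∀ i, u i ∈ convexHull ℝ (f '' Ici i)) ∧
      ∃ g : α → ℝ, ∀ᵐ x ∂μ, Tendsto (fun i => u i x) atTop (𝓝 (g x)) := by
  have hf_bound (m : ℕ) : ∀ u ∈ convexHull ℝ (f '' Ici m), ∀ x, ‖u x‖ ≤ C := by
    have : convexHull ℝ (f '' Ici m) ⊆ univ.pi fun _ => Metric.closedBall 0 C :=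
      convexHull_min (by rintro _ ⟨n, -, rfl⟩; simpa using hbound n)
        (convex_pi fun _ _ => convex_closedBall 0 C)
    intro u hu x
    simpa using this hu x (mem_univ x)
  have hf_memLp (n : ℕ) : MemLp (f n) 2 μ := .of_bound (hmeas n) C (ae_of_all _ (hbound n))
  -- the tail hulls, seen as subsets of `L²(μ)`
  set K : ℕ → Set (Lp ℝ 2 μ) := fun m =>
    {g | ∃ u ∈ convexHull ℝ (f '' Ici m), (g : α → ℝ) =ᵐ[μ] u}
  have hanti : Antitone K := fun m l hml g ⟨u, hu, hgu⟩ =>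
    ⟨u, convexHull_mono (image_mono (Ici_subset_Ici.2 hml)) hu, hgu⟩
  have hconv (m : ℕ) : Convex ℝ (K m) := by
    rintro g ⟨u, hu, hgu⟩ h ⟨v, hv, hhv⟩ a b ha hb hab
    refine ⟨a • u + b • v, convex_convexHull ℝ _ hu hv ha hb hab, ?_⟩
    filter_upwards [Lp.coeFn_add (a • g) (b • h), Lp.coeFn_smul a g, Lp.coeFn_smul b h, hgu, hhv]
      with x h1 h2 h3 h4 h5
    rw [h1, Pi.add_apply, h2, h3, Pi.smul_apply, Pi.smul_apply, h4, h5]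
    rfl
  have hne (m : ℕ) : (K m).Nonempty :=
    ⟨(hf_memLp m).toLp (f m), f m, subset_convexHull ℝ _ ⟨m, le_refl m, rfl⟩,
      MemLp.coeFn_toLp _⟩
  have hbdd : Bornology.IsBounded (K 0) := by
    refine isBounded_iff_forall_norm_le.2 ⟨_, fun g ⟨u, hu, hgu⟩ => Lp.norm_le_of_ae_bound
      (abs_nonneg C) (hgu.mono fun x hx => ?_)⟩
    rw [hx]
    exact (hf_bound 0 u hu x).trans (le_abs_self C)
  obtain ⟨w, hwK, hw⟩ := exists_cauchySeq_mem_of_antitone_convex hanti hconv hne hbdd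
  obtain ⟨g, hg⟩ := cauchySeq_tendsto_of_complete hw
  choose u hu hwu using hwK
  obtain ⟨ns, hns, hae⟩ :=
    ((tendstoInMeasure_of_tendsto_Lp hg).congr_left hwu).exists_seq_tendsto_ae
  exact ⟨fun i => u (ns i), fun i =>
    convexHull_mono (image_mono (Ici_subset_Ici.2 (hns.id_le i))) (hu (ns i)), g, hae⟩

-- A `[0,1]`-valued fractional vertex cover of the graph on `ℝ` with edge set `T`.
def IsFractionalCover (T : Set (ℝ × ℝ)) (f : ℝ → ℝ) : Prop :=
  Measurable f ∧ (∀ x, f x ∈ Icc (0 : ℝ) 1) ∧ ∀ x y, (x, y) ∈ T → 1 ≤ f x + f y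

-- The set function `γ`.
noncomputable def fractionalCoverNumber (T : Set (ℝ × ℝ)) : ℝ≥0∞ :=
  sInf {r : ℝ≥0∞ | ∃ f : ℝ → ℝ, Measurable f ∧ (∀ x, f x ∈ Set.Icc (0 : ℝ) 1) ∧
    (∀ x y, (x, y) ∈ T → 1 ≤ f x + f y) ∧ r = ENNReal.ofReal (∫ x in Set.Icc (0 : ℝ) 1, f x)}

namespace IsFractionalCover

variable {T S : Set (ℝ × ℝ)} {f : ℝ → ℝ}

theorem mono_set (hTS : T ⊆ S) (hf : IsFractionalCover S f) : IsFractionalCover T f :=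
  ⟨hf.1, hf.2.1, fun x y hxy => hf.2.2 x y (hTS hxy)⟩

theorem norm_le_one (hf : IsFractionalCover T f) (x : ℝ) : ‖f x‖ ≤ 1 := by
  rw [Real.norm_eq_abs, abs_le]
  exact ⟨by linarith [(hf.2.1 x).1], (hf.2.1 x).2⟩

theorem integrableOn (hf : IsFractionalCover T f) : IntegrableOn f (Icc 0 1) :=
  Integrable.of_bound hf.1.aestronglyMeasurable 1 (ae_of_all _ hf.norm_le_one)

theorem fractionalCoverNumber_le (hf : IsFractionalCover T f) :
    fractionalCoverNumber T ≤ ENNReal.ofReal (∫ x in Icc 0 1, f x) :=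
  sInf_le ⟨f, hf.1, hf.2.1, hf.2.2, rfl⟩

end IsFractionalCover

theorem fractionalCoverNumber_mono : Monotone fractionalCoverNumber :=
  fun _ _ hTS => le_sInf fun _ ⟨_, hmeas, hmem, hcover, hr⟩ =>
    hr ▸ (IsFractionalCover.mono_set hTS ⟨hmeas, hmem, hcover⟩).fractionalCoverNumber_le

theorem exists_isFractionalCover_integral_lt {T : Set (ℝ × ℝ)} {c : ℝ≥0∞} (hc : c ≠ ⊤)
    (h : fractionalCoverNumber T < c) :
    ∃ f, IsFractionalCover T f ∧ ∫ x in Icc 0 1, f x < c.toReal := by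
  obtain ⟨_, ⟨f, hmeas, hmem, hcover, rfl⟩, hlt⟩ := sInf_lt_iff.1 h
  exact ⟨f, ⟨hmeas, hmem, hcover⟩,
    (ofReal_lt_iff_lt_toReal (setIntegral_nonneg measurableSet_Icc fun x _ => (hmem x).1) hc).1 hlt⟩

theorem convex_setOf_isFractionalCover_integral_le (T : Set (ℝ × ℝ)) (c : ℝ) :
    Convex ℝ {f | IsFractionalCover T f ∧ ∫ x in Icc 0 1, f x ≤ c} := by
  rintro f ⟨hf, hfc⟩ g ⟨hg, hgc⟩ a b ha hb hab
  have hmem (x : ℝ) : a * f x + b * g x ∈ Icc (0 : ℝ) 1 := by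
    obtain ⟨hf0, hf1⟩ := hf.2.1 x
    obtain ⟨hg0, hg1⟩ := hg.2.1 x
    constructor <;> nlinarith
  refine ⟨⟨(hf.1.const_smul a).add (hg.1.const_smul b), hmem, fun x y hxy => ?_⟩, ?_⟩
  · have := hf.2.2 x y hxy
    have := hg.2.2 x y hxy
    simp only [Pi.add_apply, Pi.smul_apply, smul_eq_mul]
    nlinarith
  · calc ∫ x in Icc 0 1, (a • f + b • g) x
          = a * (∫ x in Icc 0 1, f x) + b * ∫ x in Icc 0 1, g x := by
          simp only [Pi.add_apply, Pi.smul_apply, smul_eq_mul]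
          rw [integral_add (hf.integrableOn.const_mul a) (hg.integrableOn.const_mul b),
            integral_const_mul, integral_const_mul]
      _ ≤ a * c + b * c := by gcongr
      _ = c := by rw [← add_mul, hab, one_mul]

theorem isFractionalCover_iUnion_limsup {A : ℕ → Set (ℝ × ℝ)} (hA : Monotone A)
    {u : ℕ → ℝ → ℝ} (hu : ∀ i, IsFractionalCover (A i) (u i)) :
    IsFractionalCover (⋃ i, A i) fun x => limsup (fun i => u i x) atTop := by
  have hbdd_le (x : ℝ) : IsBoundedUnder (· ≤ ·) atTop fun i => u i x :=
    isBoundedUnder_of ⟨1, fun i => ((hu i).2.1 x).2⟩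
  have hbdd_ge (x : ℝ) : IsBoundedUnder (· ≥ ·) atTop fun i => u i x :=
    isBoundedUnder_of ⟨0, fun i => ((hu i).2.1 x).1⟩
  refine ⟨.limsup fun i => (hu i).1, fun x => ⟨?_, ?_⟩, fun x y hxy => ?_⟩
  · exact le_limsup_of_frequently_le (.of_forall fun i => ((hu i).2.1 x).1) (hbdd_le x)
  · exact limsup_le_of_le (hbdd_ge x).isCoboundedUnder_le (.of_forall fun i => ((hu i).2.1 x).2)
  · obtain ⟨p, hp⟩ := mem_iUnion.1 hxy
    calc (1 : ℝ) ≤ limsup (fun i => u i x + u i y) atTop :=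
          le_limsup_of_frequently_le
            (eventually_atTop.2 ⟨p, fun i hi => (hu i).2.2 x y (hA hi hp)⟩).frequently
            (isBoundedUnder_le_add (hbdd_le x) (hbdd_le y))
      _ ≤ _ := limsup_add_le (hbdd_ge x) (hbdd_le x) (hbdd_ge y).isCoboundedUnder_le (hbdd_le y)

theorem exists_isFractionalCover_iUnion_integral_le {A : ℕ → Set (ℝ × ℝ)} (hA : Monotone A)
    {c : ℝ} (h : ∀ n, ∃ f, IsFractionalCover (A n) f ∧ ∫ x in Icc 0 1, f x ≤ c) :
    ∃ F, IsFractionalCover (⋃ n, A n) F ∧ ∫ x in Icc 0 1, F x ≤ c := by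
  choose f hf hfc using h
  obtain ⟨u, hu, g, hg⟩ := exists_tendsto_ae_of_mem_convexHull_tail (μ := volume.restrict (Icc 0 1))
    (fun n => (hf n).1.aestronglyMeasurable) fun n => (hf n).norm_le_one
  have hu_cover (i : ℕ) : IsFractionalCover (A i) (u i) ∧ ∫ x in Icc 0 1, u i x ≤ c :=
    convexHull_min (by rintro _ ⟨n, hn, rfl⟩; exact ⟨(hf n).mono_set (hA hn), hfc n⟩)
      (convex_setOf_isFractionalCover_integral_le (A i) c) (hu i)
  set F : ℝ → ℝ := fun x => limsup (fun i => u i x) atTop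
  have hF : ∀ᵐ x ∂volume.restrict (Icc 0 1), Tendsto (fun i => u i x) atTop (𝓝 (F x)) := by
    filter_upwards [hg] with x hx
    rwa [show F x = g x from hx.limsup_eq]
  have hlim : Tendsto (fun i => ∫ x in Icc 0 1, u i x) atTop (𝓝 (∫ x in Icc 0 1, F x)) :=
    tendsto_integral_of_dominated_convergence (fun _ => 1)
      (fun i => (hu_cover i).1.1.aestronglyMeasurable) (integrable_const 1)
      (fun i => ae_of_all _ (hu_cover i).1.norm_le_one) hF
  exact ⟨F, isFractionalCover_iUnion_limsup hA fun i => (hu_cover i).1,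
    le_of_tendsto' hlim fun i => (hu_cover i).2⟩

theorem fractionalCoverNumber_iUnion_le {A : ℕ → Set (ℝ × ℝ)} (hA : Monotone A) :
    fractionalCoverNumber (⋃ n, A n) ≤ ⨆ n, fractionalCoverNumber (A n) := by
  refine le_of_forall_gt_imp_ge_of_dense fun c hc => ?_
  obtain rfl | hc_top := eq_or_ne c ⊤
  · exact le_top
  have h (n : ℕ) : ∃ f, IsFractionalCover (A n) f ∧ ∫ x in Icc 0 1, f x ≤ c.toReal :=
    (exists_isFractionalCover_integral_lt hc_top ((le_iSup _ n).trans_lt hc)).imp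
      fun _ hf => ⟨hf.1, hf.2.le⟩
  obtain ⟨F, hF, hFc⟩ := exists_isFractionalCover_iUnion_integral_le hA h
  calc fractionalCoverNumber (⋃ n, A n) ≤ ENNReal.ofReal (∫ x in Icc 0 1, F x) :=
        hF.fractionalCoverNumber_le
    _ ≤ ENNReal.ofReal c.toReal := ENNReal.ofReal_le_ofReal hFc
    _ = c := ofReal_toReal hc_top

theorem stmt17_general (A : ℕ → Set (ℝ × ℝ)) (hmono : Monotone A) :
    (⨆ n, sInf {r : ℝ≥0∞ | ∃ f : ℝ → ℝ, Measurable f ∧ (∀ x, f x ∈ Set.Icc (0 : ℝ) 1) ∧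
        (∀ x y, (x, y) ∈ A n → 1 ≤ f x + f y) ∧
        r = ENNReal.ofReal (∫ x in Set.Icc (0 : ℝ) 1, f x)})
      = sInf {r : ℝ≥0∞ | ∃ f : ℝ → ℝ, Measurable f ∧ (∀ x, f x ∈ Set.Icc (0 : ℝ) 1) ∧
          (∀ x y, (x, y) ∈ ⋃ n, A n → 1 ≤ f x + f y) ∧
          r = ENNReal.ofReal (∫ x in Set.Icc (0 : ℝ) 1, f x)} :=
  le_antisymm (iSup_le fun n => fractionalCoverNumber_mono (subset_iUnion A n))
    (fractionalCoverNumber_iUnion_le hmono)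

theorem stmt17 (A : ℕ → Set (ℝ × ℝ)) (hmono : Monotone A)
    (hsub : ∀ n, A n ⊆ Set.Icc (0 : ℝ) 1 ×ˢ Set.Icc (0 : ℝ) 1) :
    (⨆ n, sInf {r : ℝ≥0∞ | ∃ f : ℝ → ℝ, Measurable f ∧ (∀ x, f x ∈ Set.Icc (0 : ℝ) 1) ∧
        (∀ x y, (x, y) ∈ A n → 1 ≤ f x + f y) ∧
        r = ENNReal.ofReal (∫ x in Set.Icc (0 : ℝ) 1, f x)})
      = sInf {r : ℝ≥0∞ | ∃ f : ℝ → ℝ, Measurable f ∧ (∀ x, f x ∈ Set.Icc (0 : ℝ) 1) ∧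
          (∀ x y, (x, y) ∈ ⋃ n, A n → 1 ≤ f x + f y) ∧
          r = ENNReal.ofReal (∫ x in Set.Icc (0 : ℝ) 1, f x)} :=
  stmt17_general A hmono
end
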